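/- arXiv:math/0610823 — 2 statements merged into one kernel-verified Lean document; each statement's English description precedes it below -/
import Mathlib

section
/- Suppose R_a is finite for some (equivalently, every) a ∈ A. Then A is finite, and for each a ∈ A: every reduced word at a has length at most |R⁺_a|; there exists a reduced word at a of length exactly |R⁺_a|; and any two reduced words at a of length |R⁺_a| have the same target and the same σ-composite (i.e. the longest element at a is unique). -/
open Pointwise

variable {N : Type*} {A : Type*}

/-- The element `(i j)^m ▷ a` for the action of `F₂(N)` on `A`. -/
def altIter (act : N → A → A) (i j : N) (a : A) : ℕ → A
  | 0 => a
  | m + 1 => act i (act j (altIter act i j a m))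

/-- The set `Θ(i,j;a)`. -/
def ThetaSet (act : N → A → A) (i j : N) (a : A) : Set A :=
  {x | ∃ m : ℕ, x = altIter act i j a m ∨ x = altIter act j i a m}

/-- The set of `ℕ₀`-linear combinations of elements of `s`. -/
def NSpan (s : Set (N →₀ ℝ)) : Set (N →₀ ℝ) :=
  (AddSubmonoid.closure s : Set (N →₀ ℝ))

/-- A generalized root system: a transitive action of `F₂(N)` on `A` (axiom (1)),
roots `root a ⊆ ℝ^{(N)}` with simple roots `α n a` forming a basis (axiom (2)),
and maps `σ i a ∈ GL(ℝ^{(N)})`, satisfying axioms (3)-(7). -/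
structure GRS (N : Type*) (A : Type*) where
  act : N → A → A
  act_invol : ∀ n a, act n (act n a) = a
  act_trans : ∀ a b : A, ∃ l : List N, l.foldr act a = b
  root : A → Set (N →₀ ℝ)
  α : N → A → N →₀ ℝ
  α_mem : ∀ n a, α n a ∈ root a
  α_indep : ∀ a, LinearIndependent ℝ fun n => α n a
  α_span : ∀ a, Submodule.span ℝ (Set.range fun n => α n a) = ⊤
  σ : N → A → (N →₀ ℝ) ≃ₗ[ℝ] (N →₀ ℝ)
  ax3 : ∀ a, root a =
    root a ∩ NSpan (Set.range fun n => α n a) ∪ -(root a ∩ NSpan (Set.range fun n => α n a))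
  ax4 : ∀ i a, (Set.range fun r : ℝ => r • α i a) ∩ root a = {α i a, -α i a}
  ax5_root : ∀ i a, ⇑(σ i a) '' root a = root (act i a)
  ax5_diag : ∀ i a, σ i a (α i a) = -α i (act i a)
  ax5_off : ∀ i a j, j ≠ i →
    ∃ m : ℕ, σ i a (α j a) = α j (act i a) + (m : ℝ) • α i (act i a)
  ax6 : ∀ i a v, σ i (act i a) (σ i a v) = v
  ax7 : ∀ a (i j : N), i ≠ j →
    (root a ∩ {β | ∃ p q : ℕ, β = (p : ℝ) • α i a + (q : ℝ) • α j a}).Finite →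
    (ThetaSet act i j a).Finite ∧
      (ThetaSet act i j a).ncard ∣
        (root a ∩ {β | ∃ p q : ℕ, β = (p : ℝ) • α i a + (q : ℝ) • α j a}).ncard

/-- The positive roots `R⁺_a`. -/
def GRS.pos (G : GRS N A) (a : A) : Set (N →₀ ℝ) :=
  G.root a ∩ NSpan (Set.range fun n => G.α n a)

/-- The target `i₁ ⋯ i_m ▷ a` of the word `(i₁, …, i_m)` at `a`. -/
def GRS.target (G : GRS N A) (l : List N) (a : A) : A :=
  l.foldr G.act a

/-- The σ-composite `σ_{i₁,b₁} ∘ ⋯ ∘ σ_{i_m,b_m}` of the word `(i₁, …, i_m)` at `a`. -/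
noncomputable def GRS.wmap (G : GRS N A) : List N → A → (N →₀ ℝ) ≃ₗ[ℝ] (N →₀ ℝ)
  | [], _ => LinearEquiv.refl ℝ _
  | i :: l, a => (G.wmap l a).trans (G.σ i (G.target l a))

/-- The length `ℓ` of a word at `a`: the minimal length of a word at `a`
with the same target and the same σ-composite. -/
noncomputable def GRS.len (G : GRS N A) (l : List N) (a : A) : ℕ :=
  sInf {m | ∃ l' : List N, l'.length = m ∧
    G.target l' a = G.target l a ∧ G.wmap l' a = G.wmap l a}

/-- A word of length `m` at `a` is reduced if `ℓ = m`. -/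
def GRS.Reduced (G : GRS N A) (l : List N) (a : A) : Prop :=
  G.len l a = l.length

/-- `m_{i,j;a} = |R_a ∩ (ℕ₀ α_{i,a} + ℕ₀ α_{j,a})|`. -/
noncomputable def GRS.mij (G : GRS N A) (i j : N) (a : A) : ℕ :=
  (G.root a ∩ {β | ∃ p q : ℕ, β = (p : ℝ) • G.α i a + (q : ℝ) • G.α j a}).ncard

/-- The alternating word `(i₁, …, i_m)` with `i_k = i` for `k` odd (leftmost letter `i`). -/
def altList (i j : N) : ℕ → List N
  | 0 => []
  | m + 1 => i :: altList j i m

/-- The alternating word of length `m` in the letters `i,j` whose rightmost letter is `i`. -/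
def altR (i j : N) : ℕ → List N
  | 0 => []
  | m + 1 => altR j i m ++ [i]

/-- `a_m = i_m ⋯ i_1 ▷ a` for the alternating sequence with `i_k = i` for odd `k`. -/
def aIter (act : N → A → A) (i j : N) (a : A) : ℕ → A
  | 0 => a
  | m + 1 => act (if m % 2 = 0 then i else j) (aIter act i j a m)

/-- The set of real roots `R^{re}_a`. -/
def GRS.reroot (G : GRS N A) (a : A) : Set (N →₀ ℝ) :=
  {β | ∃ (b : A) (l : List N) (n : N), G.target l b = a ∧ β = G.wmap l b (G.α n b)}

/-- The word `C(i,j;a)`: alternating of length `m_{i,j;a} - 1` with leftmost letter `i`. -/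
noncomputable def GRS.Cword (G : GRS N A) (i j : N) (a : A) : List N :=
  altList i j (G.mij i j a - 1)

namespace GRS

variable {N : Type*} {A : Type*}

section Basics
variable [Fintype N] (G : GRS N A)

/-- The basis of simple roots at `a`. -/
noncomputable def bas (a : A) : Module.Basis N ℝ (N →₀ ℝ) :=
  Module.Basis.mk (G.α_indep a) (le_of_eq (G.α_span a).symm)

@[simp] lemma bas_apply (a : A) (n : N) : G.bas a n = G.α n a := Module.Basis.mk_apply _ _ n

lemma repr_alpha (a : A) (n : N) : (G.bas a).repr (G.α n a) = Finsupp.single n 1 := by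
  rw [← G.bas_apply a n, Module.Basis.repr_self]

lemma alpha_injective (a : A) : Function.Injective fun n => G.α n a :=
  (G.α_indep a).injective

lemma nspan_coord {a : A} {β : N →₀ ℝ} (h : β ∈ NSpan (Set.range fun n => G.α n a)) (n : N) :
    ∃ k : ℕ, (G.bas a).repr β n = k := by
  classical
  have h' : β ∈ AddSubmonoid.closure (Set.range fun n => G.α n a) := h
  clear h
  induction h' using AddSubmonoid.closure_induction with
  | mem x hx =>
    obtain ⟨m, rfl⟩ := hx
    rw [G.repr_alpha, Finsupp.single_apply]
    by_cases hmn : m = n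
    · exact ⟨1, by simp [hmn]⟩
    · exact ⟨0, by simp [hmn]⟩
  | zero => exact ⟨0, by simp⟩
  | add x y hx' hy' hx hy =>
    obtain ⟨k1, hk1⟩ := hx; obtain ⟨k2, hk2⟩ := hy
    exact ⟨k1 + k2, by simp [hk1, hk2]⟩

lemma mem_nspan {a : A} {β : N →₀ ℝ} (h : ∀ n, ∃ k : ℕ, (G.bas a).repr β n = k) :
    β ∈ NSpan (Set.range fun n => G.α n a) := by
  show β ∈ AddSubmonoid.closure (Set.range fun n => G.α n a)
  have hβ : β = ∑ n, (G.bas a).repr β n • G.α n a := by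
    conv_lhs => rw [← (G.bas a).sum_repr β]
    simp
  rw [hβ]
  refine AddSubmonoid.sum_mem _ fun n _ => ?_
  obtain ⟨k, hk⟩ := h n
  rw [hk, Nat.cast_smul_eq_nsmul]
  have hmem : G.α n a ∈ AddSubmonoid.closure (Set.range fun m => G.α m a) :=
    AddSubmonoid.subset_closure ⟨n, rfl⟩
  exact AddSubmonoid.nsmul_mem _ hmem k

lemma mem_pos_iff {a : A} {β : N →₀ ℝ} :
    β ∈ G.pos a ↔ β ∈ G.root a ∧ ∀ n, ∃ k : ℕ, (G.bas a).repr β n = k :=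
  ⟨fun h => ⟨h.1, G.nspan_coord h.2⟩, fun h => ⟨h.1, G.mem_nspan h.2⟩⟩

lemma zero_notMem_root [Nonempty N] (a : A) : (0 : N →₀ ℝ) ∉ G.root a := by
  intro h0
  set n := Classical.arbitrary N
  have h : (0 : N →₀ ℝ) ∈ (Set.range fun r : ℝ => r • G.α n a) ∩ G.root a :=
    ⟨⟨0, by simp⟩, h0⟩
  rw [G.ax4] at h
  have hne := (G.α_indep a).ne_zero n
  rcases h with h | h
  · exact hne h.symm
  · simp only [Set.mem_singleton_iff] at h
    exact hne (by rw [← neg_neg (G.α n a), ← h, neg_zero])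

lemma root_eq (a : A) : G.root a = G.pos a ∪ -(G.pos a) := G.ax3 a

lemma mem_neg_pos {a : A} {β : N →₀ ℝ} : β ∈ -(G.pos a) ↔ -β ∈ G.pos a := Set.mem_neg

lemma root_cases {a : A} {β : N →₀ ℝ} (h : β ∈ G.root a) : β ∈ G.pos a ∨ -β ∈ G.pos a := by
  rw [G.root_eq] at h
  exact h.imp id fun h' => G.mem_neg_pos.mp h'

lemma pos_coord_nonneg {a : A} {β : N →₀ ℝ} (h : β ∈ G.pos a) (n : N) :
    0 ≤ (G.bas a).repr β n := by
  obtain ⟨k, hk⟩ := (G.mem_pos_iff.mp h).2 n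
  rw [hk]; positivity

lemma neg_pos_coord_nonpos {a : A} {β : N →₀ ℝ} (h : -β ∈ G.pos a) (n : N) :
    (G.bas a).repr β n ≤ 0 := by
  have := G.pos_coord_nonneg h n
  simp only [map_neg, Finsupp.coe_neg, Pi.neg_apply] at this
  linarith

lemma pos_subset_root {a : A} : G.pos a ⊆ G.root a := Set.inter_subset_left

lemma eq_zero_of_coords {a : A} {β : N →₀ ℝ} (h : ∀ n, (G.bas a).repr β n = 0) : β = 0 := by
  have : (G.bas a).repr β = 0 := Finsupp.ext fun n => h n
  simpa using (G.bas a).repr.injective (by simpa using this)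

lemma pos_neg_disj [Nonempty N] {a : A} {β : N →₀ ℝ} (h1 : β ∈ G.pos a)
    (h2 : -β ∈ G.pos a) : False := by
  have hz : β = 0 := G.eq_zero_of_coords fun n =>
    le_antisymm (G.neg_pos_coord_nonpos h2 n) (G.pos_coord_nonneg h1 n)
  exact G.zero_notMem_root a (hz ▸ G.pos_subset_root h1)

lemma alpha_mem_pos (a : A) (n : N) : G.α n a ∈ G.pos a :=
  G.mem_pos_iff.mpr ⟨G.α_mem n a, fun m => by
    classical
    rw [G.repr_alpha, Finsupp.single_apply]
    by_cases h : n = m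
    · exact ⟨1, by simp [h]⟩
    · exact ⟨0, by simp [h]⟩⟩

lemma pos_of_nonneg_coords [Nonempty N] {a : A} {β : N →₀ ℝ} (hβ : β ∈ G.root a)
    (h : ∀ n, 0 ≤ (G.bas a).repr β n) : β ∈ G.pos a := by
  rcases G.root_cases hβ with h' | h'
  · exact h'
  · exfalso
    have hz : β = 0 := G.eq_zero_of_coords fun n =>
      le_antisymm (G.neg_pos_coord_nonpos h' n) (h n)
    exact G.zero_notMem_root a (hz ▸ hβ)

lemma neg_pos_of_nonpos_coords [Nonempty N] {a : A} {β : N →₀ ℝ} (hβ : β ∈ G.root a)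
    (h : ∀ n, (G.bas a).repr β n ≤ 0) : -β ∈ G.pos a := by
  rcases G.root_cases hβ with h' | h'
  · exfalso
    have hz : β = 0 := G.eq_zero_of_coords fun n => le_antisymm (h n) (G.pos_coord_nonneg h' n)
    exact G.zero_notMem_root a (hz ▸ hβ)
  · exact h'

end Basics
end GRS
namespace GRS
variable {N : Type*} {A : Type*}
section Sigma
variable [Fintype N] [Nonempty N] (G : GRS N A)

lemma sigma_sigma (i : N) (a : A) (v : N →₀ ℝ) : G.σ i a (G.σ i (G.act i a) v) = v := by
  have := G.ax6 i (G.act i a) v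
  rwa [G.act_invol] at this

lemma sigma_symm (i : N) (a : A) : (G.σ i a).symm = G.σ i (G.act i a) := by
  refine LinearEquiv.toLinearMap_injective (LinearMap.ext fun v => ?_)
  simp only [LinearEquiv.coe_coe]
  apply (G.σ i a).injective
  rw [LinearEquiv.apply_symm_apply]
  exact (G.sigma_sigma i a v).symm

lemma sigma_root {i : N} {a : A} {β : N →₀ ℝ} (h : β ∈ G.root a) :
    G.σ i a β ∈ G.root (G.act i a) := by
  rw [← G.ax5_root]; exact ⟨β, h, rfl⟩

lemma sigma_root_iff {i : N} {a : A} {β : N →₀ ℝ} :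
    G.σ i a β ∈ G.root (G.act i a) ↔ β ∈ G.root a := by
  refine ⟨fun h => ?_, G.sigma_root⟩
  rw [← G.ax5_root] at h
  obtain ⟨γ, hγ, hγβ⟩ := h
  rwa [← (G.σ i a).injective hγβ]

lemma repr_sigma {i : N} (a : A) {n : N} (hn : n ≠ i) (β : N →₀ ℝ) :
    (G.bas (G.act i a)).repr (G.σ i a β) n = (G.bas a).repr β n := by
  classical
  have key : ((G.bas (G.act i a)).coord n).comp (G.σ i a).toLinearMap = (G.bas a).coord n := by
    refine Module.Basis.ext (G.bas a) fun m => ?_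
    simp only [LinearMap.comp_apply, LinearEquiv.coe_coe, bas_apply, Module.Basis.coord_apply]
    by_cases hmi : m = i
    · subst hmi
      rw [G.ax5_diag]
      simp [G.repr_alpha, Finsupp.single_apply, hn, Ne.symm hn]
    · obtain ⟨k, hk⟩ := G.ax5_off i a m hmi
      rw [hk]
      simp [G.repr_alpha, Finsupp.single_apply, hn, Ne.symm hn]
  calc (G.bas (G.act i a)).repr (G.σ i a β) n
      = ((G.bas (G.act i a)).coord n).comp (G.σ i a).toLinearMap β := rfl
    _ = (G.bas a).coord n β := by rw [key]
    _ = (G.bas a).repr β n := rfl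

lemma sigma_pos {i : N} {a : A} {β : N →₀ ℝ} (hβ : β ∈ G.pos a) (hne : β ≠ G.α i a) :
    G.σ i a β ∈ G.pos (G.act i a) ∧ G.σ i a β ≠ G.α i (G.act i a) := by
  classical
  have hroot : G.σ i a β ∈ G.root (G.act i a) := G.sigma_root (G.pos_subset_root hβ)
  have hnotneg : β ≠ -G.α i a := by
    rintro rfl
    exact G.pos_neg_disj hβ (by rw [neg_neg]; exact G.alpha_mem_pos a i)
  -- find a coordinate j ≠ i with positive coefficient
  have hex : ∃ j, j ≠ i ∧ (G.bas a).repr β j ≠ 0 := by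
    by_contra hcon
    push_neg at hcon
    have hβeq : β = (G.bas a).repr β i • G.α i a := by
      conv_lhs => rw [← (G.bas a).sum_repr β]
      rw [Finset.sum_eq_single i]
      · simp
      · intro m _ hmi
        rw [hcon m hmi]; simp
      · simp
    have hmem : β ∈ (Set.range fun r : ℝ => r • G.α i a) ∩ G.root a :=
      ⟨⟨(G.bas a).repr β i, hβeq.symm⟩, G.pos_subset_root hβ⟩
    rw [G.ax4] at hmem
    rcases hmem with h | h
    · exact hne h
    · exact hnotneg h
  obtain ⟨j, hji, hj⟩ := hex
  have hjpos : 0 < (G.bas a).repr β j := lt_of_le_of_ne (G.pos_coord_nonneg hβ j) (Ne.symm hj)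
  have hjco : 0 < (G.bas (G.act i a)).repr (G.σ i a β) j := by
    rwa [G.repr_sigma a hji]
  constructor
  · rcases G.root_cases hroot with h | h
    · exact h
    · exfalso
      have := G.neg_pos_coord_nonpos h j
      linarith
  · intro heq
    have : β = -G.α i a := by
      have h2 : β = G.σ i (G.act i a) (G.α i (G.act i a)) := by
        rw [← heq, ← G.sigma_symm, LinearEquiv.symm_apply_apply]
      rw [h2, G.ax5_diag, G.act_invol]
    exact hnotneg this

lemma sigma_neg_iff {i : N} {a : A} {β : N →₀ ℝ} (hβ : β ∈ G.pos a) :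
    G.σ i a β ∈ -(G.pos (G.act i a)) ↔ β = G.α i a := by
  constructor
  · intro h
    by_contra hne
    exact G.pos_neg_disj (G.sigma_pos hβ hne).1 (G.mem_neg_pos.mp h)
  · rintro rfl
    rw [G.ax5_diag, G.mem_neg_pos, neg_neg]
    exact G.alpha_mem_pos _ i

lemma image_pos_diff (i : N) (a : A) :
    ⇑(G.σ i a) '' (G.pos a \ {G.α i a}) = G.pos (G.act i a) \ {G.α i (G.act i a)} := by
  ext γ
  constructor
  · rintro ⟨β, ⟨hβ, hβne⟩, rfl⟩
    have := G.sigma_pos hβ (by simpa using hβne)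
    exact ⟨this.1, by simpa using this.2⟩
  · rintro ⟨hγ, hγne⟩
    refine ⟨G.σ i (G.act i a) γ, ⟨?_, ?_⟩, G.sigma_sigma i a _⟩
    · have := (G.sigma_pos hγ (by simpa using hγne)).1
      rwa [G.act_invol] at this
    · have := (G.sigma_pos hγ (by simpa using hγne)).2
      rw [G.act_invol] at this
      simpa using this
end Sigma

section Finiteness
variable [Fintype N] [Nonempty N] (G : GRS N A)

lemma root_finite_step {a : A} (i : N) (h : (G.root a).Finite) : (G.root (G.act i a)).Finite := by
  rw [← G.ax5_root]; exact h.image _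

lemma root_finite_all (hfin : ∃ a, (G.root a).Finite) (b : A) : (G.root b).Finite := by
  obtain ⟨a, ha⟩ := hfin
  obtain ⟨l, hl⟩ := G.act_trans a b
  subst hl
  induction l with
  | nil => exact ha
  | cons i l ih => exact G.root_finite_step i ih

lemma pos_finite (hR : ∀ b, (G.root b).Finite) (a : A) : (G.pos a).Finite :=
  (hR a).subset G.pos_subset_root

lemma ncard_pos_step (hR : ∀ b, (G.root b).Finite) (i : N) (a : A) :
    (G.pos (G.act i a)).ncard = (G.pos a).ncard := by
  have h1 : (G.pos a \ {G.α i a}).ncard = (G.pos (G.act i a) \ {G.α i (G.act i a)}).ncard := by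
    rw [← G.image_pos_diff i a]
    exact (Set.ncard_image_of_injective _ (G.σ i a).injective).symm
  have h2 := Set.ncard_diff_singleton_add_one (G.alpha_mem_pos a i) (G.pos_finite hR a)
  have h3 := Set.ncard_diff_singleton_add_one (G.alpha_mem_pos (G.act i a) i)
    (G.pos_finite hR (G.act i a))
  omega

end Finiteness

section Words
variable [Fintype N] [Nonempty N] (G : GRS N A)

@[simp] lemma target_nil (a : A) : G.target [] a = a := rfl
@[simp] lemma target_cons (i : N) (l : List N) (a : A) :
    G.target (i :: l) a = G.act i (G.target l a) := rfl
@[simp] lemma wmap_nil (a : A) : G.wmap [] a = LinearEquiv.refl ℝ _ := rfl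
@[simp] lemma wmap_cons (i : N) (l : List N) (a : A) :
    G.wmap (i :: l) a = (G.wmap l a).trans (G.σ i (G.target l a)) := rfl

lemma target_append (l₁ l₂ : List N) (a : A) :
    G.target (l₁ ++ l₂) a = G.target l₁ (G.target l₂ a) := by
  simp [GRS.target, List.foldr_append]

lemma wmap_append (l₁ l₂ : List N) (a : A) :
    G.wmap (l₁ ++ l₂) a = (G.wmap l₂ a).trans (G.wmap l₁ (G.target l₂ a)) := by
  induction l₁ with
  | nil => simp
  | cons i l₁ ih =>
    simp only [List.cons_append, wmap_cons, ih, G.target_append]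
    rfl

lemma wmap_apply_cons (i : N) (l : List N) (a : A) (v : N →₀ ℝ) :
    G.wmap (i :: l) a v = G.σ i (G.target l a) (G.wmap l a v) := rfl

lemma wmap_root {l : List N} {a : A} {β : N →₀ ℝ} (h : β ∈ G.root a) :
    G.wmap l a β ∈ G.root (G.target l a) := by
  induction l with
  | nil => exact h
  | cons i l ih => exact G.sigma_root ih

lemma wmap_reverse (l : List N) (a : A) :
    G.target l.reverse (G.target l a) = a ∧
      G.wmap l.reverse (G.target l a) = (G.wmap l a).symm := by
  induction l generalizing a with
  | nil => exact ⟨rfl, rfl⟩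
  | cons i l ih =>
    have h1 : G.act i (G.target (i :: l) a) = G.target l a := by
      simp [G.act_invol]
    constructor
    · rw [List.reverse_cons, G.target_append]
      have : G.target [i] (G.target (i :: l) a) = G.target l a := by simpa using h1
      rw [this]
      exact (ih a).1
    · rw [List.reverse_cons, G.wmap_append]
      have ht : G.target [i] (G.target (i :: l) a) = G.target l a := by simpa using h1
      rw [ht, (ih a).2]
      refine LinearEquiv.toLinearMap_injective (LinearMap.ext fun v => ?_)
      simp only [LinearEquiv.coe_coe, LinearEquiv.trans_apply]
      apply (G.wmap (i :: l) a).injective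
      rw [LinearEquiv.apply_symm_apply]
      have hv : G.wmap [i] (G.target (i :: l) a) v = G.σ i (G.target (i :: l) a) v := by
        simp [G.wmap_apply_cons]
      rw [hv]
      show G.σ i (G.target l a) (G.wmap l a ((G.wmap l a).symm _)) = v
      rw [LinearEquiv.apply_symm_apply]
      exact G.sigma_sigma i (G.target l a) v

lemma wmap_pos_invariant (hR : ∀ b, (G.root b).Finite) (l : List N) (a : A) :
    (G.pos (G.target l a)).ncard = (G.pos a).ncard := by
  induction l with
  | nil => rfl
  | cons i l ih => rw [target_cons, G.ncard_pos_step hR, ih]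

end Words
end GRS
namespace GRS
variable {N : Type*} {A : Type*}
section Inv
variable [Fintype N] [Nonempty N] (G : GRS N A)

/-- The inversion set of a word. -/
def inv (l : List N) (a : A) : Set (N →₀ ℝ) :=
  {β | β ∈ G.pos a ∧ G.wmap l a β ∈ -(G.pos (G.target l a))}

lemma inv_subset_pos (l : List N) (a : A) : G.inv l a ⊆ G.pos a := fun _ h => h.1

lemma inv_finite (hR : ∀ b, (G.root b).Finite) (l : List N) (a : A) : (G.inv l a).Finite :=
  (G.pos_finite hR a).subset (G.inv_subset_pos l a)

lemma inv_nil (a : A) : G.inv [] a = ∅ := by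
  ext β
  simp only [GRS.inv, Set.mem_setOf_eq, Set.mem_empty_iff_false, iff_false, not_and]
  intro hβ hn
  exact G.pos_neg_disj hβ (G.mem_neg_pos.mp hn)

lemma inv_congr {l l' : List N} {a : A} (ht : G.target l' a = G.target l a)
    (hw : G.wmap l' a = G.wmap l a) : G.inv l' a = G.inv l a := by
  unfold GRS.inv; rw [ht, hw]

lemma wsymm_root {l : List N} {a : A} {β : N →₀ ℝ} (h : β ∈ G.root (G.target l a)) :
    (G.wmap l a).symm β ∈ G.root a := by
  rw [← (G.wmap_reverse l a).2]
  have := G.wmap_root (l := l.reverse) (a := G.target l a) h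
  rwa [(G.wmap_reverse l a).1] at this

lemma gamma_root (l : List N) (a : A) (i : N) :
    (G.wmap l a).symm (G.α i (G.target l a)) ∈ G.root a :=
  G.wsymm_root (G.α_mem _ _)

lemma inv_cons_pos {l : List N} {a : A} {i : N}
    (hγ : (G.wmap l a).symm (G.α i (G.target l a)) ∈ G.pos a) :
    G.inv (i :: l) a = insert ((G.wmap l a).symm (G.α i (G.target l a))) (G.inv l a) ∧
      (G.wmap l a).symm (G.α i (G.target l a)) ∉ G.inv l a := by
  set c := G.target l a with hc
  set w := G.wmap l a with hww
  set γ := w.symm (G.α i c) with hγdef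
  have hwγ : w γ = G.α i c := w.apply_symm_apply _
  have hnotmem : γ ∉ G.inv l a := by
    rintro ⟨-, hn⟩
    rw [← hc, ← hww, hwγ] at hn
    exact G.pos_neg_disj (G.alpha_mem_pos c i) (G.mem_neg_pos.mp hn)
  refine ⟨?_, hnotmem⟩
  ext β
  simp only [GRS.inv, Set.mem_setOf_eq, Set.mem_insert_iff, target_cons]
  constructor
  · rintro ⟨hβ, hσ⟩
    rw [G.wmap_apply_cons] at hσ
    rcases G.root_cases (G.wmap_root (l := l) (G.pos_subset_root hβ)) with hp | hp
    · left
      have := (G.sigma_neg_iff (i := i) hp).mp hσ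
      rw [hγdef, ← this, ← hww, w.symm_apply_apply]
    · right
      exact ⟨hβ, G.mem_neg_pos.mpr hp⟩
  · rintro (rfl | ⟨hβ, hn⟩)
    · refine ⟨hγ, ?_⟩
      rw [G.wmap_apply_cons, ← hww, hwγ, G.ax5_diag, G.mem_neg_pos, neg_neg]
      exact G.alpha_mem_pos _ i
    · refine ⟨hβ, ?_⟩
      rw [G.wmap_apply_cons]
      have hp : -(w β) ∈ G.pos c := G.mem_neg_pos.mp hn
      have hne : -(w β) ≠ G.α i c := by
        intro heq
        have hβγ : β = -γ := by
          rw [hγdef, ← heq]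
          simp [hww]
        exact G.pos_neg_disj hγ (by rw [← hβγ]; exact hβ)
      have := (G.sigma_pos hp hne).1
      rw [G.mem_neg_pos, ← hww]
      rw [← map_neg]
      exact this
  
lemma inv_cons_neg {l : List N} {a : A} {i : N}
    (hγ : -((G.wmap l a).symm (G.α i (G.target l a))) ∈ G.pos a) :
    G.inv (i :: l) a = G.inv l a \ {-((G.wmap l a).symm (G.α i (G.target l a)))} ∧
      -((G.wmap l a).symm (G.α i (G.target l a))) ∈ G.inv l a := by
  set c := G.target l a with hc
  set w := G.wmap l a with hww
  set γ := w.symm (G.α i c) with hγdef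
  have hwγ : w γ = G.α i c := w.apply_symm_apply _
  have hwδ : w (-γ) = -(G.α i c) := by rw [map_neg, hwγ]
  have hmem : -γ ∈ G.inv l a := by
    refine ⟨hγ, ?_⟩
    rw [← hww, ← hc, hwδ, G.mem_neg_pos, neg_neg]
    exact G.alpha_mem_pos c i
  refine ⟨?_, hmem⟩
  ext β
  simp only [GRS.inv, Set.mem_setOf_eq, Set.mem_diff, Set.mem_singleton_iff, target_cons]
  constructor
  · rintro ⟨hβ, hσ⟩
    rw [G.wmap_apply_cons] at hσ
    rcases G.root_cases (G.wmap_root (l := l) (G.pos_subset_root hβ)) with hp | hp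
    · exfalso
      have := (G.sigma_neg_iff (i := i) hp).mp hσ
      have hβγ : β = γ := by rw [hγdef, ← this, ← hww, w.symm_apply_apply]
      rw [hβγ] at hβ
      exact G.pos_neg_disj hβ hγ
    · refine ⟨⟨hβ, G.mem_neg_pos.mpr hp⟩, ?_⟩
      intro heq
      rw [heq, ← hww, hwδ] at hσ
      have h2 : G.σ i c (-(G.α i c)) = G.α i (G.act i c) := by
        rw [map_neg, G.ax5_diag, neg_neg]
      rw [h2] at hσ
      exact G.pos_neg_disj (G.alpha_mem_pos (G.act i c) i) (G.mem_neg_pos.mp hσ)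
  · rintro ⟨⟨hβ, hn⟩, hne⟩
    refine ⟨hβ, ?_⟩
    rw [G.wmap_apply_cons]
    have hp : -(w β) ∈ G.pos c := G.mem_neg_pos.mp hn
    have hne2 : -(w β) ≠ G.α i c := by
      intro heq
      apply hne
      have : w β = w (-γ) := by rw [hwδ, ← heq, neg_neg]
      exact w.injective this
    have := (G.sigma_pos hp hne2).1
    rw [G.mem_neg_pos, ← hww, ← map_neg]
    exact this

lemma inv_cons_ncard_pos (hR : ∀ b, (G.root b).Finite) {l : List N} {a : A} {i : N}
    (hγ : (G.wmap l a).symm (G.α i (G.target l a)) ∈ G.pos a) :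
    (G.inv (i :: l) a).ncard = (G.inv l a).ncard + 1 := by
  obtain ⟨heq, hnm⟩ := G.inv_cons_pos hγ
  rw [heq, Set.ncard_insert_of_notMem hnm (G.inv_finite hR l a)]

lemma inv_cons_ncard_neg (hR : ∀ b, (G.root b).Finite) {l : List N} {a : A} {i : N}
    (hγ : -((G.wmap l a).symm (G.α i (G.target l a))) ∈ G.pos a) :
    (G.inv (i :: l) a).ncard + 1 = (G.inv l a).ncard := by
  obtain ⟨heq, hm⟩ := G.inv_cons_neg hγ
  rw [heq, Set.ncard_diff_singleton_add_one hm (G.inv_finite hR l a)]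

lemma gamma_dichotomy (l : List N) (a : A) (i : N) :
    (G.wmap l a).symm (G.α i (G.target l a)) ∈ G.pos a ∨
      -((G.wmap l a).symm (G.α i (G.target l a))) ∈ G.pos a :=
  G.root_cases (G.gamma_root l a i)

lemma inv_length (hR : ∀ b, (G.root b).Finite) (l : List N) (a : A) :
    ∃ m, l.length = (G.inv l a).ncard + 2 * m := by
  induction l with
  | nil => exact ⟨0, by simp [G.inv_nil]⟩
  | cons i l ih =>
    obtain ⟨m, hm⟩ := ih
    rcases G.gamma_dichotomy l a i with h | h
    · exact ⟨m, by rw [List.length_cons, G.inv_cons_ncard_pos hR h]; omega⟩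
    · refine ⟨m + 1, ?_⟩
      have := G.inv_cons_ncard_neg hR h
      rw [List.length_cons]
      omega

lemma ncard_inv_le_length (hR : ∀ b, (G.root b).Finite) (l : List N) (a : A) :
    (G.inv l a).ncard ≤ l.length := by
  obtain ⟨m, hm⟩ := G.inv_length hR l a; omega

end Inv
end GRS
namespace GRS
variable {N : Type*} {A : Type*}
section InvAppend
variable [Fintype N] [Nonempty N] (G : GRS N A)

lemma target_append_singleton (l : List N) (s : N) (a : A) :
    G.target (l ++ [s]) a = G.target l (G.act s a) := by
  rw [G.target_append]; rfl

lemma wmap_append_singleton (l : List N) (s : N) (a : A) (β : N →₀ ℝ) :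
    G.wmap (l ++ [s]) a β = G.wmap l (G.act s a) (G.σ s a β) := by
  rw [G.wmap_append]
  have h1 : G.wmap [s] a β = G.σ s a β := by simp [G.wmap_apply_cons]
  have h2 : G.target [s] a = G.act s a := rfl
  simp only [LinearEquiv.trans_apply, h1, h2]

lemma inv_append_eq_pos {l : List N} {s : N} {a : A}
    (h : G.wmap l (G.act s a) (G.α s (G.act s a)) ∈ G.pos (G.target l (G.act s a))) :
    G.inv (l ++ [s]) a =
      insert (G.α s a) (⇑(G.σ s (G.act s a)) '' (G.inv l (G.act s a) \ {G.α s (G.act s a)})) := by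
  set a1 := G.act s a with ha1
  set w := G.wmap l a1 with hw
  set c := G.target l a1 with hc
  have hback : ∀ v, G.σ s a1 (G.σ s a v) = v := G.ax6 s a
  have hfor : ∀ v, G.σ s a (G.σ s a1 v) = v := G.sigma_sigma s a
  have hmem : ∀ β, β ∈ G.inv (l ++ [s]) a ↔ β ∈ G.pos a ∧ w (G.σ s a β) ∈ -(G.pos c) := by
    intro β
    unfold GRS.inv
    rw [Set.mem_setOf_eq, G.target_append_singleton, G.wmap_append_singleton]
  ext β
  rw [hmem, Set.mem_insert_iff]
  constructor
  · rintro ⟨hβ, hcond⟩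
    by_cases hβα : β = G.α s a
    · exact Or.inl hβα
    right
    have hσβ := G.sigma_pos hβ hβα
    rw [← ha1] at hσβ
    have hσne : G.σ s a β ≠ G.α s a1 := by
      intro heq
      have hβeq : β = G.σ s a1 (G.α s a1) := by rw [← heq, hback]
      rw [G.ax5_diag] at hβeq
      have : G.act s a1 = a := G.act_invol s a
      rw [this] at hβeq
      exact G.pos_neg_disj hβ (by rw [hβeq, neg_neg]; exact G.alpha_mem_pos a s)
    refine ⟨G.σ s a β, ⟨⟨hσβ.1, hcond⟩, hσne⟩, hback β⟩
  · rintro (rfl | ⟨γ', ⟨⟨hγp, hγn⟩, hγne⟩, rfl⟩)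
    · refine ⟨G.alpha_mem_pos a s, ?_⟩
      have : G.σ s a (G.α s a) = -(G.α s a1) := by rw [G.ax5_diag, ha1]
      rw [this, map_neg, G.mem_neg_pos, neg_neg]
      exact h
    · have hγne' : γ' ≠ G.α s a1 := by simpa using hγne
      constructor
      · have := (G.sigma_pos hγp hγne').1
        rwa [G.act_invol] at this
      · rw [hfor]
        exact hγn

lemma inv_append_eq_neg {l : List N} {s : N} {a : A}
    (h : G.wmap l (G.act s a) (G.α s (G.act s a)) ∈ -(G.pos (G.target l (G.act s a)))) :
    G.inv (l ++ [s]) a =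
      ⇑(G.σ s (G.act s a)) '' (G.inv l (G.act s a) \ {G.α s (G.act s a)}) := by
  set a1 := G.act s a with ha1
  set w := G.wmap l a1 with hw
  set c := G.target l a1 with hc
  have hback : ∀ v, G.σ s a1 (G.σ s a v) = v := G.ax6 s a
  have hfor : ∀ v, G.σ s a (G.σ s a1 v) = v := G.sigma_sigma s a
  have hmem : ∀ β, β ∈ G.inv (l ++ [s]) a ↔ β ∈ G.pos a ∧ w (G.σ s a β) ∈ -(G.pos c) := by
    intro β
    unfold GRS.inv
    rw [Set.mem_setOf_eq, G.target_append_singleton, G.wmap_append_singleton]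
  ext β
  rw [hmem]
  constructor
  · rintro ⟨hβ, hcond⟩
    have hβα : β ≠ G.α s a := by
      rintro rfl
      have : G.σ s a (G.α s a) = -(G.α s a1) := by rw [G.ax5_diag, ha1]
      rw [this, map_neg] at hcond
      rw [G.mem_neg_pos, neg_neg] at hcond
      exact G.pos_neg_disj hcond (G.mem_neg_pos.mp h)
    have hσβ := G.sigma_pos hβ hβα
    rw [← ha1] at hσβ
    have hσne : G.σ s a β ≠ G.α s a1 := by
      intro heq
      have hβeq : β = G.σ s a1 (G.α s a1) := by rw [← heq, hback]
      rw [G.ax5_diag] at hβeq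
      have : G.act s a1 = a := G.act_invol s a
      rw [this] at hβeq
      exact G.pos_neg_disj hβ (by rw [hβeq, neg_neg]; exact G.alpha_mem_pos a s)
    refine ⟨G.σ s a β, ⟨⟨hσβ.1, hcond⟩, hσne⟩, hback β⟩
  · rintro ⟨γ', ⟨⟨hγp, hγn⟩, hγne⟩, rfl⟩
    have hγne' : γ' ≠ G.α s a1 := by simpa using hγne
    constructor
    · have := (G.sigma_pos hγp hγne').1
      rwa [G.act_invol] at this
    · rw [hfor]
      exact hγn

lemma inv_append_ncard_pos (hR : ∀ b, (G.root b).Finite) {l : List N} {s : N} {a : A}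
    (h : G.wmap l (G.act s a) (G.α s (G.act s a)) ∈ G.pos (G.target l (G.act s a))) :
    (G.inv (l ++ [s]) a).ncard = (G.inv l (G.act s a)).ncard + 1 := by
  set a1 := G.act s a
  rw [G.inv_append_eq_pos h]
  have hano : G.α s a1 ∉ G.inv l a1 := by
    rintro ⟨-, hn⟩
    exact G.pos_neg_disj h (G.mem_neg_pos.mp hn)
  have hd : G.inv l a1 \ {G.α s a1} = G.inv l a1 := by
    rw [Set.diff_singleton_eq_self hano]
  rw [hd]
  have hni : G.α s a ∉ ⇑(G.σ s a1) '' G.inv l a1 := by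
    rintro ⟨γ', ⟨hγp, -⟩, hγeq⟩
    have : γ' = G.σ s a (G.α s a) := by rw [← hγeq, G.sigma_sigma s a]
    rw [G.ax5_diag] at this
    exact G.pos_neg_disj hγp (by rw [this, neg_neg]; exact G.alpha_mem_pos a1 s)
  rw [Set.ncard_insert_of_notMem hni (((G.inv_finite hR l a1)).image _),
    Set.ncard_image_of_injective _ (G.σ s a1).injective]

lemma inv_append_ncard_neg (hR : ∀ b, (G.root b).Finite) {l : List N} {s : N} {a : A}
    (h : G.wmap l (G.act s a) (G.α s (G.act s a)) ∈ -(G.pos (G.target l (G.act s a)))) :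
    (G.inv (l ++ [s]) a).ncard + 1 = (G.inv l (G.act s a)).ncard := by
  set a1 := G.act s a
  rw [G.inv_append_eq_neg h]
  have hα : G.α s a1 ∈ G.inv l a1 := ⟨G.alpha_mem_pos a1 s, h⟩
  rw [Set.ncard_image_of_injective _ (G.σ s a1).injective]
  exact Set.ncard_diff_singleton_add_one hα (G.inv_finite hR l a1)

end InvAppend
end GRS
namespace GRS
variable {N : Type*} {A : Type*}
section Len
variable [Fintype N] [Nonempty N] (G : GRS N A)

lemma len_le_length (l : List N) (a : A) : G.len l a ≤ l.length :=
  Nat.sInf_le ⟨l, rfl, rfl, rfl⟩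

lemma len_spec (l : List N) (a : A) :
    ∃ l', l'.length = G.len l a ∧ G.target l' a = G.target l a ∧ G.wmap l' a = G.wmap l a := by
  have h : {m | ∃ l' : List N, l'.length = m ∧
      G.target l' a = G.target l a ∧ G.wmap l' a = G.wmap l a}.Nonempty :=
    ⟨l.length, l, rfl, rfl, rfl⟩
  exact Nat.sInf_mem h

lemma len_congr {l l' : List N} {a : A} (ht : G.target l' a = G.target l a)
    (hw : G.wmap l' a = G.wmap l a) : G.len l' a = G.len l a := by
  unfold GRS.len
  rw [ht, hw]

lemma ncard_inv_le_len (hR : ∀ b, (G.root b).Finite) (l : List N) (a : A) :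
    (G.inv l a).ncard ≤ G.len l a := by
  obtain ⟨l', hl', ht, hw⟩ := G.len_spec l a
  rw [← G.inv_congr ht hw, ← hl']
  exact G.ncard_inv_le_length hR l' a

lemma len_parity (hR : ∀ b, (G.root b).Finite) (l : List N) (a : A) :
    ∃ m, G.len l a = (G.inv l a).ncard + 2 * m := by
  obtain ⟨l', hl', ht, hw⟩ := G.len_spec l a
  obtain ⟨m, hm⟩ := G.inv_length hR l' a
  rw [G.inv_congr ht hw] at hm
  exact ⟨m, by omega⟩

lemma wmap_eq_of_apply {l l' : List N} {a : A} (h : ∀ β, G.wmap l a β = G.wmap l' a β) :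
    G.wmap l a = G.wmap l' a :=
  LinearEquiv.toLinearMap_injective (LinearMap.ext h)

lemma len_append_le (l : List N) (s : N) (a : A) :
    G.len (l ++ [s]) a ≤ G.len l (G.act s a) + 1 := by
  obtain ⟨r, hr, ht, hw⟩ := G.len_spec l (G.act s a)
  refine Nat.sInf_le ⟨r ++ [s], by simp [hr], ?_, ?_⟩
  · rw [G.target_append_singleton, G.target_append_singleton, ht]
  · refine G.wmap_eq_of_apply fun β => ?_
    rw [G.wmap_append_singleton, G.wmap_append_singleton, hw]

lemma len_unappend (l : List N) (s : N) (a : A) :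
    G.len l (G.act s a) ≤ G.len (l ++ [s]) a + 1 := by
  obtain ⟨r, hr, ht, hw⟩ := G.len_spec (l ++ [s]) a
  refine Nat.sInf_le ⟨r ++ [s], by simp [hr], ?_, ?_⟩
  · rw [G.target_append_singleton, G.act_invol, ht, G.target_append_singleton]
  · refine G.wmap_eq_of_apply fun β => ?_
    rw [G.wmap_append_singleton]
    have hinv : G.act s (G.act s a) = a := G.act_invol s a
    rw [hinv, hw, G.wmap_append_singleton, G.sigma_sigma]

lemma len_append_cases (hR : ∀ b, (G.root b).Finite) (l : List N) (s : N) (a : A) :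
    G.len (l ++ [s]) a = G.len l (G.act s a) + 1 ∨
      G.len l (G.act s a) = G.len (l ++ [s]) a + 1 := by
  have h1 := G.len_append_le l s a
  have h2 := G.len_unappend l s a
  obtain ⟨m1, hm1⟩ := G.len_parity hR (l ++ [s]) a
  obtain ⟨m2, hm2⟩ := G.len_parity hR l (G.act s a)
  have hroot : G.wmap l (G.act s a) (G.α s (G.act s a)) ∈ G.root (G.target l (G.act s a)) :=
    G.wmap_root (G.α_mem _ _)
  rcases G.root_cases hroot with h | h
  · have := G.inv_append_ncard_pos hR h
    omega
  · have hneg : G.wmap l (G.act s a) (G.α s (G.act s a)) ∈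
        -(G.pos (G.target l (G.act s a))) := G.mem_neg_pos.mpr h
    have := G.inv_append_ncard_neg hR hneg
    omega

lemma len_strip (hR : ∀ b, (G.root b).Finite) {l : List N} {a : A} (hq : 0 < G.len l a) :
    ∃ t, G.len (l ++ [t]) (G.act t a) + 1 = G.len l a := by
  obtain ⟨r, hr, ht, hw⟩ := G.len_spec l a
  rcases List.eq_nil_or_concat r with rfl | ⟨r₁, t, rfl⟩
  · simp at hr; omega
  rw [List.concat_eq_append] at *
  refine ⟨t, ?_⟩
  have hle : G.len (l ++ [t]) (G.act t a) ≤ r₁.length := by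
    refine Nat.sInf_le ⟨r₁, rfl, ?_, ?_⟩
    · rw [G.target_append_singleton, G.act_invol]
      rw [← ht, G.target_append_singleton]
    · refine G.wmap_eq_of_apply fun β => ?_
      rw [G.wmap_append_singleton]
      have hinv : G.act t (G.act t a) = a := G.act_invol t a
      rw [hinv, ← hw, G.wmap_append_singleton, G.sigma_sigma]
  have hge := G.len_unappend (l := l) (s := t) (a := G.act t a)
  rw [G.act_invol] at hge
  have hlen : r₁.length + 1 = G.len l a := by
    have := hr; simp at this; omega
  omega

end Len
end GRS
namespace GRS
variable {N : Type*} {A : Type*}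
section Rank2a
variable [Fintype N] [Nonempty N] (G : GRS N A)

lemma root_neg {a : A} {β : N →₀ ℝ} (h : β ∈ G.root a) : -β ∈ G.root a := by
  rcases G.root_cases h with h' | h'
  · rw [G.root_eq]
    exact Or.inr (G.mem_neg_pos.mpr (by rwa [neg_neg]))
  · exact G.pos_subset_root h'

/-- The span of `α i, α j` (coordinate description). -/
def sp2 (i j : N) (a : A) : Set (N →₀ ℝ) :=
  {β | ∀ n, n ≠ i → n ≠ j → (G.bas a).repr β n = 0}

/-- The rank-two positive system. -/
def S2 (i j : N) (a : A) : Set (N →₀ ℝ) :=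
  G.root a ∩ {β | ∃ p q : ℕ, β = (p : ℝ) • G.α i a + (q : ℝ) • G.α j a}

lemma repr_comb {i j : N} (hij : i ≠ j) (a : A) (p q : ℝ) :
    (G.bas a).repr (p • G.α i a + q • G.α j a) i = p ∧
    (G.bas a).repr (p • G.α i a + q • G.α j a) j = q ∧
    ∀ n, n ≠ i → n ≠ j → (G.bas a).repr (p • G.α i a + q • G.α j a) n = 0 := by
  classical
  simp only [map_add, map_smul, G.repr_alpha, Finsupp.coe_add, Finsupp.coe_smul, Pi.add_apply,
    Pi.smul_apply, Finsupp.single_apply, smul_eq_mul]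
  refine ⟨?_, ?_, ?_⟩
  · simp [hij, Ne.symm hij]
  · simp [hij, Ne.symm hij]
  · intro n hni hnj
    simp [Ne.symm hni, Ne.symm hnj, hni, hnj]

lemma S2_subset_sp2 {i j : N} (hij : i ≠ j) (a : A) : G.S2 i j a ⊆ G.sp2 i j a := by
  rintro β ⟨-, p, q, rfl⟩
  exact (G.repr_comb hij a p q).2.2

lemma S2_subset_pos {i j : N} (hij : i ≠ j) (a : A) : G.S2 i j a ⊆ G.pos a := by
  rintro β ⟨hr, p, q, hβ⟩
  refine G.mem_pos_iff.mpr ⟨hr, fun n => ?_⟩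
  obtain ⟨h1, h2, h3⟩ := G.repr_comb hij a (p : ℝ) (q : ℝ)
  by_cases hni : n = i
  · subst hni; rw [hβ, h1]; exact ⟨p, rfl⟩
  by_cases hnj : n = j
  · subst hnj; rw [hβ, h2]; exact ⟨q, rfl⟩
  · rw [hβ, h3 n hni hnj]; exact ⟨0, by simp⟩

lemma sp2_decomp {i j : N} (hij : i ≠ j) {a : A} {β : N →₀ ℝ} (h : β ∈ G.sp2 i j a) :
    β = (G.bas a).repr β i • G.α i a + (G.bas a).repr β j • G.α j a := by
  classical
  conv_lhs => rw [← (G.bas a).sum_repr β]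
  simp only [bas_apply]
  rw [show (Finset.univ : Finset N) = insert i (insert j (Finset.univ \ {i, j})) from ?_]
  · rw [Finset.sum_insert, Finset.sum_insert]
    · have hz : ∑ n ∈ Finset.univ \ {i, j}, (G.bas a).repr β n • G.α n a = 0 := by
        refine Finset.sum_eq_zero fun n hn => ?_
        simp only [Finset.mem_sdiff, Finset.mem_univ, Finset.mem_insert,
          Finset.mem_singleton, true_and] at hn
        push_neg at hn
        rw [h n hn.1 hn.2, zero_smul]
      rw [hz, add_zero]
    · simp
    · simp [hij]
  · ext n
    simp only [Finset.mem_univ, Finset.mem_insert, Finset.mem_sdiff, Finset.mem_singleton,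
      true_and, true_iff]
    by_cases hni : n = i
    · exact Or.inl hni
    by_cases hnj : n = j
    · exact Or.inr (Or.inl hnj)
    · exact Or.inr (Or.inr (by push_neg; exact ⟨hni, hnj⟩))

lemma S2_eq {i j : N} (hij : i ≠ j) (a : A) : G.S2 i j a = G.pos a ∩ G.sp2 i j a := by
  ext β
  constructor
  · intro h
    exact ⟨G.S2_subset_pos hij a h, G.S2_subset_sp2 hij a h⟩
  · rintro ⟨hp, hs⟩
    refine ⟨G.pos_subset_root hp, ?_⟩
    obtain ⟨p, hpi⟩ := (G.mem_pos_iff.mp hp).2 i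
    obtain ⟨q, hpj⟩ := (G.mem_pos_iff.mp hp).2 j
    exact ⟨p, q, by rw [← hpi, ← hpj]; exact G.sp2_decomp hij hs⟩

lemma sp2_neg {i j : N} {a : A} {β : N →₀ ℝ} (h : β ∈ G.sp2 i j a) : -β ∈ G.sp2 i j a := by
  intro n h1 h2
  simp only [map_neg, Finsupp.coe_neg, Pi.neg_apply, h n h1 h2, neg_zero]

lemma root_sp2_cases {i j : N} (hij : i ≠ j) {a : A} {β : N →₀ ℝ} (hr : β ∈ G.root a)
    (hs : β ∈ G.sp2 i j a) : β ∈ G.S2 i j a ∨ -β ∈ G.S2 i j a := by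
  rcases G.root_cases hr with h | h
  · exact Or.inl ((G.S2_eq hij a).symm ▸ Set.mem_inter h hs)
  · exact Or.inr ((G.S2_eq hij a).symm ▸ Set.mem_inter h (G.sp2_neg hs))

lemma sp2_sigma {i j x : N} (hx : x = i ∨ x = j) {a : A} {β : N →₀ ℝ}
    (h : β ∈ G.sp2 i j a) : G.σ x a β ∈ G.sp2 i j (G.act x a) := by
  intro n h1 h2
  have hnx : n ≠ x := by rcases hx with rfl | rfl <;> assumption
  rw [G.repr_sigma a hnx]
  exact h n h1 h2

lemma sigma_image_rootsp2 {i j x : N} (hx : x = i ∨ x = j) (a : A) :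
    ⇑(G.σ x a) '' (G.root a ∩ G.sp2 i j a) = G.root (G.act x a) ∩ G.sp2 i j (G.act x a) := by
  ext γ
  constructor
  · rintro ⟨β, ⟨hr, hs⟩, rfl⟩
    exact ⟨G.sigma_root hr, G.sp2_sigma hx hs⟩
  · rintro ⟨hr, hs⟩
    refine ⟨G.σ x (G.act x a) γ, ⟨?_, ?_⟩, G.sigma_sigma x a γ⟩
    · have := G.sigma_root (i := x) hr
      rwa [G.act_invol] at this
    · have := G.sp2_sigma (i := i) (j := j) hx hs
      rwa [G.act_invol] at this

lemma S2_finite (hR : ∀ b, (G.root b).Finite) (i j : N) (a : A) : (G.S2 i j a).Finite :=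
  (hR a).subset Set.inter_subset_left

lemma rootsp2_eq_union {i j : N} (hij : i ≠ j) (a : A) :
    G.root a ∩ G.sp2 i j a = G.S2 i j a ∪ -(G.S2 i j a) := by
  ext β
  constructor
  · rintro ⟨hr, hs⟩
    rcases G.root_sp2_cases hij hr hs with h | h
    · exact Or.inl h
    · exact Or.inr (Set.mem_neg.mpr h)
  · rintro (h | h)
    · exact ⟨(G.S2_eq hij a ▸ h).1.1, G.S2_subset_sp2 hij a h⟩
    · have h' : -β ∈ G.S2 i j a := Set.mem_neg.mp h
      have hp := G.S2_subset_pos hij a h'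
      have hs := G.S2_subset_sp2 hij a h'
      refine ⟨?_, ?_⟩
      · have := G.root_neg (G.pos_subset_root hp)
        rwa [neg_neg] at this
      · have := G.sp2_neg hs
        rwa [neg_neg] at this

lemma ncard_rootsp2 (hR : ∀ b, (G.root b).Finite) {i j : N} (hij : i ≠ j) (a : A) :
    (G.root a ∩ G.sp2 i j a).ncard = 2 * (G.S2 i j a).ncard := by
  rw [G.rootsp2_eq_union hij a]
  have hdisj : Disjoint (G.S2 i j a) (-(G.S2 i j a)) := by
    rw [Set.disjoint_left]
    intro β h1 h2
    exact G.pos_neg_disj (G.S2_subset_pos hij a h1)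
      (G.S2_subset_pos hij a (Set.mem_neg.mp h2))
  have hneg : -(G.S2 i j a) = Neg.neg '' (G.S2 i j a) := by
    ext β; rw [Set.mem_neg]
    constructor
    · intro h; exact ⟨-β, h, neg_neg β⟩
    · rintro ⟨γ, hγ, rfl⟩; rwa [neg_neg]
  rw [Set.ncard_union_eq hdisj (G.S2_finite hR i j a)
    (by rw [hneg]; exact (G.S2_finite hR i j a).image _), hneg,
    Set.ncard_image_of_injective _ neg_injective]
  omega

lemma ncard_S2_step (hR : ∀ b, (G.root b).Finite) {i j x : N} (hij : i ≠ j)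
    (hx : x = i ∨ x = j) (a : A) :
    (G.S2 i j (G.act x a)).ncard = (G.S2 i j a).ncard := by
  have h1 : (G.root (G.act x a) ∩ G.sp2 i j (G.act x a)).ncard =
      (G.root a ∩ G.sp2 i j a).ncard := by
    rw [← G.sigma_image_rootsp2 hx a, Set.ncard_image_of_injective _ (G.σ x a).injective]
  rw [G.ncard_rootsp2 hR hij, G.ncard_rootsp2 hR hij] at h1
  omega

lemma ncard_S2_word (hR : ∀ b, (G.root b).Finite) {i j : N} (hij : i ≠ j)
    {l : List N} (hl : ∀ x ∈ l, x = i ∨ x = j) (a : A) :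
    (G.S2 i j (G.target l a)).ncard = (G.S2 i j a).ncard := by
  induction l with
  | nil => rfl
  | cons x l ih =>
    rw [target_cons, G.ncard_S2_step hR hij (hl x List.mem_cons_self)]
    exact ih fun y hy => hl y (List.mem_cons_of_mem x hy)

lemma wmap_sp2 {i j : N} {l : List N} (hl : ∀ x ∈ l, x = i ∨ x = j) {a : A} {β : N →₀ ℝ}
    (h : β ∈ G.sp2 i j a) : G.wmap l a β ∈ G.sp2 i j (G.target l a) := by
  induction l with
  | nil => exact h
  | cons x l ih =>
    rw [G.wmap_apply_cons, target_cons]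
    exact G.sp2_sigma (hl x List.mem_cons_self) (ih fun y hy => hl y (List.mem_cons_of_mem x hy))

lemma wsymm_sp2 {i j : N} {l : List N} (hl : ∀ x ∈ l, x = i ∨ x = j) {a : A} {β : N →₀ ℝ}
    (h : β ∈ G.sp2 i j (G.target l a)) : (G.wmap l a).symm β ∈ G.sp2 i j a := by
  rw [← (G.wmap_reverse l a).2]
  have := G.wmap_sp2 (l := l.reverse) (a := G.target l a)
    (fun y hy => hl y (List.mem_reverse.mp hy)) h
  rwa [(G.wmap_reverse l a).1] at this

lemma alpha_mem_sp2 {i j x : N} (hx : x = i ∨ x = j) (a : A) : G.α x a ∈ G.sp2 i j a := by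
  classical
  intro n h1 h2
  have hnx : n ≠ x := by rcases hx with rfl | rfl <;> assumption
  rw [G.repr_alpha, Finsupp.single_apply, if_neg (Ne.symm hnx)]

lemma inv_subset_sp2 {i j : N} {l : List N} (hl : ∀ x ∈ l, x = i ∨ x = j) (a : A) :
    G.inv l a ⊆ G.sp2 i j a := by
  induction l with
  | nil => rw [G.inv_nil]; exact Set.empty_subset _
  | cons x l ih =>
    have hx := hl x List.mem_cons_self
    have hl' : ∀ y ∈ l, y = i ∨ y = j := fun y hy => hl y (List.mem_cons_of_mem x hy)
    have hγs : (G.wmap l a).symm (G.α x (G.target l a)) ∈ G.sp2 i j a :=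
      G.wsymm_sp2 hl' (G.alpha_mem_sp2 hx _)
    rcases G.gamma_dichotomy l a x with h | h
    · rw [(G.inv_cons_pos h).1]
      intro β hβ
      rcases hβ with rfl | hβ
      · exact hγs
      · exact ih hl' hβ
    · rw [(G.inv_cons_neg h).1]
      intro β hβ
      exact ih hl' hβ.1

lemma ncard_inv_le_d (hR : ∀ b, (G.root b).Finite) {i j : N} (hij : i ≠ j) {l : List N}
    (hl : ∀ x ∈ l, x = i ∨ x = j) (a : A) :
    (G.inv l a).ncard ≤ (G.S2 i j a).ncard := by
  refine Set.ncard_le_ncard ?_ (G.S2_finite hR i j a)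
  rw [G.S2_eq hij a]
  exact fun β hβ => ⟨G.inv_subset_pos l a hβ, G.inv_subset_sp2 hl a hβ⟩

lemma both_neg (hR : ∀ b, (G.root b).Finite) {i j : N} (hij : i ≠ j) {l : List N}
    (hl : ∀ x ∈ l, x = i ∨ x = j) {a : A}
    (h1 : -((G.wmap l a).symm (G.α i (G.target l a))) ∈ G.pos a)
    (h2 : -((G.wmap l a).symm (G.α j (G.target l a))) ∈ G.pos a) :
    (G.S2 i j a).ncard ≤ (G.inv l a).ncard := by
  classical
  set b := G.target l a with hb
  set w := G.wmap l a with hw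
  have hmapsto : ∀ β ∈ G.S2 i j b, -(w.symm β) ∈ G.inv l a := by
    rintro β ⟨hr, p, q, hβeq⟩
    have hsymm : w.symm β = (p : ℝ) • w.symm (G.α i b) + (q : ℝ) • w.symm (G.α j b) := by
      rw [hβeq, map_add, map_smul, map_smul]
    have hcoords : ∀ n, (G.bas a).repr (w.symm β) n ≤ 0 := by
      intro n
      rw [hsymm]
      simp only [map_add, map_smul, Finsupp.coe_add, Finsupp.coe_smul, Pi.add_apply,
        Pi.smul_apply, smul_eq_mul]
      have hc1 := G.neg_pos_coord_nonpos h1 n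
      have hc2 := G.neg_pos_coord_nonpos h2 n
      have hp : (0:ℝ) ≤ p := by positivity
      have hq : (0:ℝ) ≤ q := by positivity
      nlinarith
    have hroot : w.symm β ∈ G.root a := G.wsymm_root hr
    have hneg : -(w.symm β) ∈ G.pos a := G.neg_pos_of_nonpos_coords hroot hcoords
    refine ⟨hneg, ?_⟩
    rw [← hw, map_neg, w.apply_symm_apply, ← hb]
    rw [G.mem_neg_pos, neg_neg]
    exact G.S2_subset_pos hij b ⟨hr, p, q, hβeq⟩
  have hinj : Set.InjOn (fun β => -(w.symm β)) (G.S2 i j b) := by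
    intro x _ y _ hxy
    simp only [neg_inj] at hxy
    exact w.symm.injective hxy
  calc (G.S2 i j a).ncard = (G.S2 i j b).ncard := (G.ncard_S2_word hR hij hl a).symm
    _ = ((fun β => -(w.symm β)) '' (G.S2 i j b)).ncard := (Set.ncard_image_of_injOn hinj).symm
    _ ≤ (G.inv l a).ncard := Set.ncard_le_ncard (fun γ => ?_) (G.inv_finite hR l a)
  rintro ⟨β, hβ, rfl⟩
  exact hmapsto β hβ

end Rank2a
end GRS
namespace GRS
variable {N : Type*} {A : Type*}

lemma altR_length : ∀ (k : ℕ) (i j : N), (altR i j k).length = k := by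
  intro k
  induction k with
  | zero => intro i j; rfl
  | succ k ih => intro i j; simp [altR, ih j i]

lemma altR_mem : ∀ (k : ℕ) (i j : N), ∀ x ∈ altR i j k, x = i ∨ x = j := by
  intro k
  induction k with
  | zero => intro i j x hx; simp [altR] at hx
  | succ k ih =>
    intro i j x hx
    simp only [altR, List.mem_append, List.mem_singleton] at hx
    rcases hx with hx | rfl
    · exact (ih j i x hx).symm
    · exact Or.inl rfl

lemma altR_cons : ∀ (k : ℕ) (i j : N), altR i j (k + 1) = (if Even k then i else j) :: altR i j k := by
  intro k
  induction k with
  | zero => intro i j; rw [if_pos (Even.zero)]; rfl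
  | succ k ih =>
    intro i j
    show altR j i (k + 1) ++ [i] = _
    rw [ih j i]
    show (if Even k then j else i) :: (altR j i k ++ [i]) = _
    have h1 : altR j i k ++ [i] = altR i j (k + 1) := rfl
    rw [h1]
    congr 1
    rcases Nat.even_or_odd k with h | h
    · rw [if_pos h, if_neg (by simp [Nat.even_add_one, h])]
    · rw [if_neg (Nat.not_even_iff_odd.mpr h), if_pos h.add_one]

section Alt
variable [Fintype N] [Nonempty N] (G : GRS N A)

lemma gamma_cons (l : List N) (a : A) (z : N) :
    (G.wmap (z :: l) a).symm (G.α z (G.target (z :: l) a)) =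
      -((G.wmap l a).symm (G.α z (G.target l a))) := by
  apply (G.wmap (z :: l) a).injective
  rw [LinearEquiv.apply_symm_apply, G.wmap_apply_cons, map_neg, LinearEquiv.apply_symm_apply,
    map_neg, G.ax5_diag]
  simp

/-- The counting lemma for alternating words. -/
lemma alt_inv (hR : ∀ b, (G.root b).Finite) {i j : N} (hij : i ≠ j) (a : A) :
    ∀ k, k ≤ (G.S2 i j a).ncard →
      (G.inv (altR i j k) a).ncard = k ∧
      (1 ≤ k → -((G.wmap (altR i j k) a).symm
        (G.α (if Even k then j else i) (G.target (altR i j k) a))) ∈ G.pos a) := by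
  intro k
  induction k with
  | zero =>
    intro _
    refine ⟨by rw [show altR i j 0 = [] from rfl, G.inv_nil]; simp, by omega⟩
  | succ k ih =>
    intro hk1
    obtain ⟨ihc, ihm⟩ := ih (by omega)
    set z := if Even k then i else j with hz
    have hcons : altR i j (k + 1) = z :: altR i j k := altR_cons k i j
    have hlm : (if Even (k + 1) then j else i) = z := by
      rw [hz]
      rcases Nat.even_or_odd k with h | h
      · rw [if_neg (by simp [Nat.even_add_one, h]), if_pos h]
      · rw [if_pos h.add_one, if_neg (Nat.not_even_iff_odd.mpr h)]
    have hγpos : (G.wmap (altR i j k) a).symm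
        (G.α z (G.target (altR i j k) a)) ∈ G.pos a := by
      rcases G.gamma_dichotomy (altR i j k) a z with h | h
      · exact h
      · exfalso
        rcases Nat.eq_zero_or_pos k with rfl | hkpos
        · simp only [altR, wmap_nil, target_nil] at h
          have heq : (LinearEquiv.refl ℝ (N →₀ ℝ)).symm (G.α z a) = G.α z a := rfl
          rw [heq] at h
          exact G.pos_neg_disj (G.alpha_mem_pos a z) h
        · have hboth := ihm hkpos
          have hd : (G.S2 i j a).ncard ≤ (G.inv (altR i j k) a).ncard := by
            rcases Nat.even_or_odd k with he | he
            · refine G.both_neg hR hij (altR_mem k i j) ?_ ?_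
              · rw [hz] at h; simpa [he] using h
              · simpa [he] using hboth
            · refine G.both_neg hR hij (altR_mem k i j) ?_ ?_
              · simpa [Nat.not_even_iff_odd.mpr he] using hboth
              · rw [hz] at h; simpa [Nat.not_even_iff_odd.mpr he] using h
          omega
    constructor
    · rw [hcons, G.inv_cons_ncard_pos hR hγpos, ihc]
    · intro _
      rw [hcons, hlm, G.gamma_cons]
      rwa [neg_neg]

lemma alt_inv_top (hR : ∀ b, (G.root b).Finite) {i j : N} (hij : i ≠ j) (a : A) :
    G.inv (altR i j ((G.S2 i j a).ncard)) a = G.S2 i j a := by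
  have hsub : G.inv (altR i j ((G.S2 i j a).ncard)) a ⊆ G.S2 i j a := by
    rw [G.S2_eq hij a]
    exact fun β hβ => ⟨G.inv_subset_pos _ a hβ, G.inv_subset_sp2 (altR_mem _ i j) a hβ⟩
  have hcard := (G.alt_inv hR hij a ((G.S2 i j a).ncard) le_rfl).1
  exact Set.eq_of_subset_of_ncard_le hsub (le_of_eq hcard.symm) (G.S2_finite hR i j a)

lemma altIter_eq (act : N → A → A) (i j : N) (a : A) (m : ℕ) :
    altIter act i j a m = (fun x => act i (act j x))^[m] a := by
  induction m with
  | zero => rfl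
  | succ m ih => rw [Function.iterate_succ_apply', ← ih]; rfl

lemma theta_period (hR : ∀ b, (G.root b).Finite) {i j : N} (hij : i ≠ j) (a : A) :
    (fun x => G.act i (G.act j x))^[(G.S2 i j a).ncard] a = a := by
  classical
  obtain ⟨hTfin, hdvd⟩ := G.ax7 a i j hij (G.S2_finite hR i j a)
  set τ := fun x => G.act i (G.act j x) with hτ
  set τ' := fun x => G.act j (G.act i x) with hτ'
  have hleft : Function.LeftInverse τ' τ := fun x => by simp [hτ, hτ', G.act_invol]
  have hright : Function.LeftInverse τ τ' := fun x => by simp [hτ, hτ', G.act_invol]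
  have hτinj : Function.Injective τ := hleft.injective
  have hmemT : ∀ m, τ^[m] a ∈ ThetaSet G.act i j a := fun m =>
    ⟨m, Or.inl (altIter_eq G.act i j a m).symm⟩
  have hmemT' : ∀ m, τ'^[m] a ∈ ThetaSet G.act i j a := fun m =>
    ⟨m, Or.inr (altIter_eq G.act j i a m).symm⟩
  have hex : ∃ n, 0 < n ∧ τ^[n] a = a := by
    obtain ⟨m₁, m₂, hne, heq⟩ := Finite.exists_ne_map_eq_of_infinite
      (fun m : ℕ => (⟨τ^[m] a, hTfin.mem_toFinset.mpr (hmemT m)⟩ : ↥hTfin.toFinset))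
    have heq' : τ^[m₁] a = τ^[m₂] a := congrArg Subtype.val heq
    rcases Nat.lt_or_ge m₁ m₂ with h | h
    · refine ⟨m₂ - m₁, by omega, ?_⟩
      refine Function.Injective.iterate hτinj m₁ ?_
      rw [← Function.iterate_add_apply, show m₁ + (m₂ - m₁) = m₂ by omega, heq']
    · have hlt : m₂ < m₁ := by omega
      refine ⟨m₁ - m₂, by omega, ?_⟩
      refine Function.Injective.iterate hτinj m₂ ?_
      rw [← Function.iterate_add_apply, show m₂ + (m₁ - m₂) = m₁ by omega, heq']
  set n₀ := Nat.find hex with hn₀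
  obtain ⟨hn₀pos, hn₀eq⟩ := Nat.find_spec hex
  have hper : ∀ q m, τ^[m + n₀ * q] a = τ^[m] a := by
    intro q
    induction q with
    | zero => simp
    | succ q ihq =>
      intro m
      rw [show m + n₀ * (q + 1) = (m + n₀ * q) + n₀ by ring, Function.iterate_add_apply,
        hn₀eq, ihq]
  have hmod : ∀ m, τ^[m] a = τ^[m % n₀] a := by
    intro m
    conv_lhs => rw [show m = m % n₀ + n₀ * (m / n₀) from (Nat.mod_add_div m n₀).symm]
    exact hper _ _
  have hO : ThetaSet G.act i j a = (fun r => τ^[r] a) '' ↑(Finset.range n₀) := by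
    ext x
    constructor
    · rintro ⟨m, rfl | rfl⟩
      · rw [altIter_eq, ← hτ, hmod]
        exact ⟨m % n₀, by simp [hn₀, Nat.mod_lt _ hn₀pos], rfl⟩
      · rw [altIter_eq, ← hτ']
        have hτ'm : τ'^[m] a = τ^[n₀ * m - m] a := by
          refine Function.Injective.iterate hτinj m ?_
          have h1 : τ^[m] (τ'^[m] a) = a := (hright.iterate m) a
          have h2 : τ^[m] (τ^[n₀ * m - m] a) = a := by
            rw [← Function.iterate_add_apply,
              show m + (n₀ * m - m) = n₀ * m by
                have hpos' : 0 < n₀ := hn₀pos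
                have := Nat.le_mul_of_pos_left m hpos'
                omega, hmod, Nat.mul_mod_right]
            rfl
          exact h1.trans h2.symm
        rw [hτ'm, hmod]
        exact ⟨(n₀ * m - m) % n₀, by simp [hn₀, Nat.mod_lt _ hn₀pos], rfl⟩
    · rintro ⟨r, -, rfl⟩
      exact hmemT r
  have hstep : ∀ r s, r < s → s < n₀ → τ^[r] a = τ^[s] a → False := by
    intro r s hrs hsn heq
    have h1 : τ^[s - r] a = a := by
      refine Function.Injective.iterate hτinj r ?_
      rw [← Function.iterate_add_apply, show r + (s - r) = s by omega, heq]
    exact Nat.find_min hex (show s - r < n₀ by omega) ⟨by omega, h1⟩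
  have hinjO : Set.InjOn (fun r => τ^[r] a) ↑(Finset.range n₀) := by
    intro r hr s hs hrseq
    simp only [Finset.coe_range, Set.mem_Iio] at hr hs
    by_contra hne
    rcases Nat.lt_or_ge r s with h | h
    · exact hstep r s h hs hrseq
    · exact hstep s r (by omega) hr hrseq.symm
  have hcard : (ThetaSet G.act i j a).ncard = n₀ := by
    rw [hO, Set.ncard_image_of_injOn hinjO, Set.ncard_coe_finset, Finset.card_range]
  have hd : n₀ ∣ (G.S2 i j a).ncard := by rw [← hcard]; exact hdvd
  obtain ⟨c, hc⟩ := hd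
  rw [hmod, hc, Nat.mul_mod_right]
  rfl

end Alt
end GRS
namespace GRS
variable {N : Type*} {A : Type*}
section AltTarget
variable [Fintype N] [Nonempty N] (G : GRS N A)

lemma comm_iter (f g : A → A) : ∀ (m : ℕ) (x : A),
    (fun y => f (g y))^[m] (f x) = f ((fun y => g (f y))^[m] x) := by
  intro m
  induction m with
  | zero => intro x; rfl
  | succ m ih =>
    intro x
    rw [Function.iterate_succ_apply, Function.iterate_succ_apply]
    exact ih (g (f x))

lemma altR_target : ∀ (k : ℕ) (i j : N) (a : A),
    G.target (altR i j k) a = if Even k then (fun x => G.act j (G.act i x))^[k / 2] a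
      else G.act i ((fun x => G.act j (G.act i x))^[k / 2] a) := by
  intro k
  induction k with
  | zero => intro i j a; rw [if_pos Even.zero]; rfl
  | succ k ih =>
    intro i j a
    show G.target (altR j i k ++ [i]) a = _
    rw [G.target_append_singleton, ih j i (G.act i a)]
    rcases Nat.even_or_odd k with h | h
    · rw [if_pos h, if_neg (by simp [Nat.even_add_one, h])]
      rw [show (k + 1) / 2 = k / 2 by obtain ⟨t, rfl⟩ := h; omega]
      exact comm_iter (G.act i) (G.act j) (k / 2) a
    · rw [if_neg (Nat.not_even_iff_odd.mpr h), if_pos h.add_one]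
      rw [show (k + 1) / 2 = k / 2 + 1 by obtain ⟨t, rfl⟩ := h; omega]
      rw [comm_iter (G.act i) (G.act j) (k / 2) a]
      rw [Function.iterate_succ_apply']

lemma alt_target_eq (hR : ∀ b, (G.root b).Finite) {i j : N} (hij : i ≠ j) (a : A) :
    G.target (altR i j ((G.S2 i j a).ncard)) a = G.target (altR j i ((G.S2 i j a).ncard)) a := by
  set d := (G.S2 i j a).ncard with hd
  set τij := fun x => G.act i (G.act j x) with hτij
  set τji := fun x => G.act j (G.act i x) with hτji
  have hper : τij^[d] a = a := G.theta_period hR hij a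
  have hli : Function.LeftInverse τji τij := fun x => by simp [hτij, hτji, G.act_invol]
  have hri : Function.LeftInverse τij τji := fun x => by simp [hτij, hτji, G.act_invol]
  rw [G.altR_target, G.altR_target]
  rcases Nat.even_or_odd d with h | h
  · rw [if_pos h, if_pos h]
    obtain ⟨m, hm⟩ := h
    have hm2 : d / 2 = m := by omega
    rw [hm2]
    refine Function.Injective.iterate hli.injective m ?_
    have h1 : τij^[m] (τji^[m] a) = a := (hri.iterate m) a
    have h2 : τij^[m] (τij^[m] a) = a := by
      rw [← Function.iterate_add_apply, show m + m = d by omega, hper]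
    exact h1.trans h2.symm
  · rw [if_neg (Nat.not_even_iff_odd.mpr h), if_neg (Nat.not_even_iff_odd.mpr h)]
    obtain ⟨m, hm⟩ := h
    have hm2 : d / 2 = m := by omega
    rw [hm2]
    have hkey : τji^[m] a = τij^[m + 1] a := by
      have h1 : τji^[m] (τij^[d] a) = τji^[m] a := by rw [hper]
      have h2 : τji^[m] (τij^[d] a) = τij^[m + 1] a := by
        rw [show d = m + (m + 1) by omega, Function.iterate_add_apply]
        exact (hli.iterate m) _
      rw [← h1, h2]
    rw [hkey, Function.iterate_succ_apply']
    show G.act i (τij (τij^[m] a)) = G.act j (τij^[m] a)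
    rw [show τij (τij^[m] a) = G.act i (G.act j (τij^[m] a)) from rfl, G.act_invol]

end AltTarget
end GRS
namespace GRS
variable {N : Type*} {A : Type*}
section Matrix2
variable [Fintype N] [Nonempty N] (G : GRS N A)

/-- The 2×2 matrix of a span2-preserving map in the bases of simple roots. -/
noncomputable def m2 (i j : N) (w : (N →₀ ℝ) ≃ₗ[ℝ] (N →₀ ℝ)) (a b : A) :
    Matrix (Fin 2) (Fin 2) ℝ :=
  !![(G.bas b).repr (w (G.α i a)) i, (G.bas b).repr (w (G.α j a)) i;
     (G.bas b).repr (w (G.α i a)) j, (G.bas b).repr (w (G.α j a)) j]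

lemma m2_comp {i j : N} (hij : i ≠ j) (w w' : (N →₀ ℝ) ≃ₗ[ℝ] (N →₀ ℝ)) (a b c : A)
    (hw1 : w (G.α i a) ∈ G.sp2 i j b) (hw2 : w (G.α j a) ∈ G.sp2 i j b) :
    G.m2 i j (w.trans w') a c = G.m2 i j w' b c * G.m2 i j w a b := by
  have hdi := G.sp2_decomp hij hw1
  have hdj := G.sp2_decomp hij hw2
  have e1 : (w.trans w') (G.α i a) =
      ((G.bas b).repr (w (G.α i a)) i) • w' (G.α i b) +
      ((G.bas b).repr (w (G.α i a)) j) • w' (G.α j b) := by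
    show w' (w (G.α i a)) = _
    conv_lhs => rw [hdi]
    rw [map_add, map_smul, map_smul]
  have e2 : (w.trans w') (G.α j a) =
      ((G.bas b).repr (w (G.α j a)) i) • w' (G.α i b) +
      ((G.bas b).repr (w (G.α j a)) j) • w' (G.α j b) := by
    show w' (w (G.α j a)) = _
    conv_lhs => rw [hdj]
    rw [map_add, map_smul, map_smul]
  ext r s
  fin_cases r <;> fin_cases s <;>
    simp [m2, Matrix.mul_apply, Fin.sum_univ_two, e1, e2, map_add, map_smul] <;> ring

lemma m2_sigma_det {i j x : N} (hij : i ≠ j) (hx : x = i ∨ x = j) (c : A) :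
    (G.m2 i j (G.σ x c) c (G.act x c)).det = -1 := by
  classical
  rcases hx with rfl | rfl
  · obtain ⟨m, hm⟩ := G.ax5_off x c j (Ne.symm hij)
    rw [Matrix.det_fin_two]
    simp only [m2, Matrix.cons_val', Matrix.cons_val_zero, Matrix.cons_val_one, Matrix.head_cons,
      Matrix.empty_val', Matrix.cons_val_fin_one, Matrix.head_fin_const, Matrix.of_apply]
    rw [G.ax5_diag, hm]
    simp [G.repr_alpha, Finsupp.single_apply, hij, Ne.symm hij]
  · obtain ⟨m, hm⟩ := G.ax5_off x c i hij
    rw [Matrix.det_fin_two]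
    simp only [m2, Matrix.cons_val', Matrix.cons_val_zero, Matrix.cons_val_one, Matrix.head_cons,
      Matrix.empty_val', Matrix.cons_val_fin_one, Matrix.head_fin_const, Matrix.of_apply]
    rw [G.ax5_diag, hm]
    simp [G.repr_alpha, Finsupp.single_apply, hij, Ne.symm hij]

lemma m2_word_det {i j : N} (hij : i ≠ j) {l : List N} (hl : ∀ x ∈ l, x = i ∨ x = j) (a : A) :
    (G.m2 i j (G.wmap l a) a (G.target l a)).det = (-1 : ℝ) ^ l.length := by
  classical
  induction l with
  | nil =>
    simp only [wmap_nil, target_nil, List.length_nil, pow_zero]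
    rw [Matrix.det_fin_two]
    simp only [m2, Matrix.cons_val', Matrix.cons_val_zero, Matrix.cons_val_one, Matrix.head_cons,
      Matrix.empty_val', Matrix.cons_val_fin_one, Matrix.head_fin_const, Matrix.of_apply]
    have : ∀ n, (LinearEquiv.refl ℝ (N →₀ ℝ)) (G.α n a) = G.α n a := fun n => rfl
    rw [this, this]
    simp [G.repr_alpha, Finsupp.single_apply, hij, Ne.symm hij]
  | cons x l ih =>
    have hx := hl x List.mem_cons_self
    have hl' : ∀ y ∈ l, y = i ∨ y = j := fun y hy => hl y (List.mem_cons_of_mem x hy)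
    have hcomp := G.m2_comp hij (G.wmap l a) (G.σ x (G.target l a)) a (G.target l a)
      (G.act x (G.target l a))
      (G.wmap_sp2 hl' (G.alpha_mem_sp2 (Or.inl rfl) a))
      (G.wmap_sp2 hl' (G.alpha_mem_sp2 (Or.inr rfl) a))
    rw [wmap_cons, target_cons, hcomp, Matrix.det_mul, G.m2_sigma_det hij hx, ih hl',
      List.length_cons, pow_succ]
    ring

lemma ht_ge_one {a : A} {β : N →₀ ℝ} (h : β ∈ G.pos a) :
    1 ≤ ∑ n, (G.bas a).repr β n := by
  have hnon : ∀ n, 0 ≤ (G.bas a).repr β n := G.pos_coord_nonneg h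
  by_contra hcon
  push_neg at hcon
  have hex : ∃ n, 1 ≤ (G.bas a).repr β n := by
    by_contra hc2
    push_neg at hc2
    have : ∀ n, (G.bas a).repr β n = 0 := by
      intro n
      obtain ⟨k, hk⟩ := (G.mem_pos_iff.mp h).2 n
      rcases Nat.eq_zero_or_pos k with rfl | hk1
      · simpa using hk
      · exfalso
        have h2 := hc2 n
        rw [hk] at h2
        have : (1:ℝ) ≤ k := by exact_mod_cast hk1
        linarith
    exact G.zero_notMem_root a ((G.eq_zero_of_coords this) ▸ G.pos_subset_root h)
  obtain ⟨n₀, hn₀⟩ := hex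
  have := Finset.single_le_sum (f := fun n => (G.bas a).repr β n)
    (fun n _ => hnon n) (Finset.mem_univ n₀)
  linarith

lemma image_simple (hR : ∀ b, (G.root b).Finite) {l : List N} {a : A}
    (hpos : ∀ β ∈ G.pos a, G.wmap l a β ∈ G.pos (G.target l a)) (n : N) :
    ∃ m, G.wmap l a (G.α n a) = G.α m (G.target l a) := by
  classical
  set b := G.target l a with hb
  set w := G.wmap l a with hw
  have himg : ⇑w '' G.pos a = G.pos b := by
    refine Set.eq_of_subset_of_ncard_le ?_ ?_ (G.pos_finite hR b)
    · rintro β ⟨γ, hγ, rfl⟩; exact hpos γ hγ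
    · rw [Set.ncard_image_of_injective _ w.injective]
      exact le_of_eq (G.wmap_pos_invariant hR l a)
  have hsymmpos : ∀ β ∈ G.pos b, w.symm β ∈ G.pos a := by
    intro β hβ
    rw [← himg] at hβ
    obtain ⟨γ, hγ, rfl⟩ := hβ
    rwa [w.symm_apply_apply]
  have hβpos : w (G.α n a) ∈ G.pos b := hpos _ (G.alpha_mem_pos a n)
  -- natural number coordinates
  have hc := (G.mem_pos_iff.mp hβpos).2
  choose f hf using hc
  -- the expansion
  have hexp : G.α n a = ∑ k, ((f k : ℝ)) • w.symm (G.α k b) := by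
    have h1 : w (G.α n a) = ∑ k, ((f k : ℝ)) • G.α k b := by
      conv_lhs => rw [← (G.bas b).sum_repr (w (G.α n a))]
      refine Finset.sum_congr rfl fun k _ => ?_
      rw [hf k, bas_apply]
    calc G.α n a = w.symm (w (G.α n a)) := (w.symm_apply_apply _).symm
      _ = w.symm (∑ k, ((f k : ℝ)) • G.α k b) := by rw [← h1]
      _ = ∑ k, ((f k : ℝ)) • w.symm (G.α k b) := by rw [map_sum]; simp
  -- height computation
  have hhtn : ∑ m', (G.bas a).repr (G.α n a) m' = 1 := by
    simp [G.repr_alpha, Finsupp.single_apply]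
  have hpointwise : ∀ m', (G.bas a).repr (∑ k, ((f k : ℝ)) • w.symm (G.α k b)) m' =
      ∑ k, (f k : ℝ) * (G.bas a).repr (w.symm (G.α k b)) m' := by
    intro m'
    rw [map_sum, Finsupp.finset_sum_apply]
    refine Finset.sum_congr rfl fun k _ => ?_
    rw [map_smul]
    simp
  have hht2 : ∑ m', (G.bas a).repr (G.α n a) m' =
      ∑ k, (f k : ℝ) * (∑ m', (G.bas a).repr (w.symm (G.α k b)) m') := by
    conv_lhs => rw [hexp]
    rw [Finset.sum_congr rfl fun m' _ => hpointwise m', Finset.sum_comm]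
    exact Finset.sum_congr rfl fun k _ => (Finset.mul_sum _ _ _).symm
  have hhtge : ∀ k, 1 ≤ ∑ m', (G.bas a).repr (w.symm (G.α k b)) m' := fun k =>
    G.ht_ge_one (hsymmpos _ (G.alpha_mem_pos b k))
  have hsumle : ∑ k, (f k : ℝ) ≤ 1 := by
    rw [← hhtn, hht2]
    refine Finset.sum_le_sum fun k _ => ?_
    have h1 := hhtge k
    have h2 : (0:ℝ) ≤ f k := by positivity
    nlinarith
  have hsumle' : ∑ k, f k ≤ 1 := by
    have : ((∑ k, f k : ℕ) : ℝ) ≤ 1 := by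
      rw [Nat.cast_sum]; exact hsumle
    exact_mod_cast this
  have hsumne : ∑ k, f k ≠ 0 := by
    intro hzero
    have hallz : ∀ k, f k = 0 := fun k =>
      (Finset.sum_eq_zero_iff.mp hzero) k (Finset.mem_univ k)
    have hwz : w (G.α n a) = 0 := by
      apply G.eq_zero_of_coords (a := b)
      intro k
      rw [hf k, hallz k, Nat.cast_zero]
    have : G.α n a = 0 := by
      have := congrArg w.symm hwz
      rwa [w.symm_apply_apply, map_zero] at this
    exact (G.α_indep a).ne_zero n this
  obtain ⟨k₀, -, hk₀ne⟩ := Finset.exists_ne_zero_of_sum_ne_zero hsumne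
  have hk₀le : f k₀ ≤ ∑ k, f k := Finset.single_le_sum (fun k _ => Nat.zero_le _)
    (Finset.mem_univ k₀)
  have hk₀1 : f k₀ = 1 := by omega
  have hrest : ∀ k, k ≠ k₀ → f k = 0 := by
    intro k hk
    have hsplit := Finset.add_sum_erase Finset.univ f (Finset.mem_univ k₀)
    have hz : ∑ m' ∈ Finset.univ.erase k₀, f m' = 0 := by omega
    exact (Finset.sum_eq_zero_iff.mp hz) k (by simp [hk])
  refine ⟨k₀, ?_⟩
  have h1 : w (G.α n a) = ∑ k, ((f k : ℝ)) • G.α k b := by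
    conv_lhs => rw [← (G.bas b).sum_repr (w (G.α n a))]
    refine Finset.sum_congr rfl fun k _ => ?_
    rw [hf k, bas_apply]
  rw [h1, Finset.sum_eq_single k₀]
  · rw [hk₀1, Nat.cast_one, one_smul]
  · intro k _ hk
    rw [hrest k hk, Nat.cast_zero, zero_smul]
  · intro h; exact absurd (Finset.mem_univ k₀) h

end Matrix2
end GRS
namespace GRS
variable {N : Type*} {A : Type*}

lemma neg_set_eq (s : Set (N →₀ ℝ)) : -s = Neg.neg '' s := by
  ext β; rw [Set.mem_neg]
  constructor
  · intro h; exact ⟨-β, h, neg_neg β⟩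
  · rintro ⟨γ, hγ, rfl⟩; rwa [neg_neg]

lemma ncard_neg_set (s : Set (N →₀ ℝ)) : (-s).ncard = s.ncard := by
  rw [neg_set_eq, Set.ncard_image_of_injective _ neg_injective]

section Braid
variable [Fintype N] [Nonempty N] (G : GRS N A)

lemma mem_inv {l : List N} {a : A} {β : N →₀ ℝ} :
    β ∈ G.inv l a ↔ β ∈ G.pos a ∧ G.wmap l a β ∈ -(G.pos (G.target l a)) := Iff.rfl

lemma S2_comm (i j : N) (a : A) : G.S2 j i a = G.S2 i j a := by
  ext β
  constructor
  · rintro ⟨hr, p, q, h⟩; exact ⟨hr, q, p, by rw [h, add_comm]⟩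
  · rintro ⟨hr, p, q, h⟩; exact ⟨hr, q, p, by rw [h, add_comm]⟩

lemma wmap_alpha_off {i j : N} {l : List N} (hl : ∀ x ∈ l, x = i ∨ x = j) (a : A) (n : N) :
    ∀ m, m ≠ i → m ≠ j →
      (G.bas (G.target l a)).repr (G.wmap l a (G.α n a)) m = (G.bas a).repr (G.α n a) m := by
  induction l with
  | nil => intro m _ _; rfl
  | cons x l ih =>
    intro m hmi hmj
    have hx := hl x List.mem_cons_self
    have hl' : ∀ y ∈ l, y = i ∨ y = j := fun y hy => hl y (List.mem_cons_of_mem x hy)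
    have hmx : m ≠ x := by rcases hx with rfl | rfl <;> assumption
    rw [G.wmap_apply_cons, target_cons, G.repr_sigma _ hmx]
    exact ih hl' m hmi hmj

theorem braid (hR : ∀ b, (G.root b).Finite) {i j : N} (hij : i ≠ j) (a : A) :
    G.target (altR i j ((G.S2 i j a).ncard)) a = G.target (altR j i ((G.S2 i j a).ncard)) a ∧
      G.wmap (altR i j ((G.S2 i j a).ncard)) a = G.wmap (altR j i ((G.S2 i j a).ncard)) a := by
  classical
  have htar := G.alt_target_eq hR hij a
  refine ⟨htar, ?_⟩
  set d := (G.S2 i j a).ncard with hd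
  set b := G.target (altR i j d) a with hb
  have hbv : G.target (altR j i d) a = b := htar.symm
  set u := G.wmap (altR i j d) a with hu
  set v := G.wmap (altR j i d) a with hv
  have hS2c : G.S2 j i a = G.S2 i j a := G.S2_comm i j a
  have hmemu : ∀ x ∈ altR i j d, x = i ∨ x = j := altR_mem d i j
  have hmemv : ∀ x ∈ altR j i d, x = i ∨ x = j := fun x hx => (altR_mem d j i x hx).symm
  have hIu : G.inv (altR i j d) a = G.S2 i j a := G.alt_inv_top hR hij a
  have hIv : G.inv (altR j i d) a = G.S2 i j a := by
    have h0 := G.alt_inv_top hR (Ne.symm hij) a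
    rw [hS2c] at h0
    rwa [← hd] at h0
  have hdS2b : (G.S2 i j b).ncard = d := by
    have h0 := G.ncard_S2_word hR hij hmemu a
    rw [← hb] at h0
    rw [h0]
  -- u and v map S2 into the negative of S2 at b
  have hUS : ∀ β ∈ G.S2 i j a, u β ∈ -(G.S2 i j b) := by
    intro β hβ
    have hβi : β ∈ G.inv (altR i j d) a := hIu.symm ▸ hβ
    have hneg : u β ∈ -(G.pos b) := hβi.2
    have hsp : u β ∈ G.sp2 i j b := by
      rw [hu, hb]
      exact G.wmap_sp2 hmemu (G.S2_subset_sp2 hij a hβ)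
    rw [Set.mem_neg, G.S2_eq hij b]
    exact ⟨G.mem_neg_pos.mp hneg, G.sp2_neg hsp⟩
  have hVS : ∀ β ∈ G.S2 i j a, v β ∈ -(G.S2 i j b) := by
    intro β hβ
    have hβi : β ∈ G.inv (altR j i d) a := hIv.symm ▸ hβ
    have hneg : v β ∈ -(G.pos b) := by
      have := hβi.2
      rwa [hbv] at this
    have hsp : v β ∈ G.sp2 i j b := by
      have := G.wmap_sp2 hmemv (G.S2_subset_sp2 hij a hβ) (l := altR j i d)
      rwa [hbv] at this
    rw [Set.mem_neg, G.S2_eq hij b]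
    exact ⟨G.mem_neg_pos.mp hneg, G.sp2_neg hsp⟩
  have hnegfin : (-(G.S2 i j b)).Finite := by
    rw [neg_set_eq]
    exact (G.S2_finite hR i j b).image _
  have hUSeq : ⇑u '' (G.S2 i j a) = -(G.S2 i j b) := by
    refine Set.eq_of_subset_of_ncard_le (fun γ hγ => ?_) ?_ hnegfin
    · obtain ⟨β, hβ, rfl⟩ := hγ
      exact hUS β hβ
    · rw [Set.ncard_image_of_injective _ u.injective, ncard_neg_set, hdS2b]
  have hVSeq : ⇑v '' (G.S2 i j a) = -(G.S2 i j b) := by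
    refine Set.eq_of_subset_of_ncard_le (fun γ hγ => ?_) ?_ hnegfin
    · obtain ⟨β, hβ, rfl⟩ := hγ
      exact hVS β hβ
    · rw [Set.ncard_image_of_injective _ v.injective, ncard_neg_set, hdS2b]
  -- the concatenated word
  set zl := (altR i j d).reverse ++ altR j i d with hzl
  have hzmem : ∀ x ∈ zl, x = i ∨ x = j := by
    intro x hx
    rw [hzl, List.mem_append, List.mem_reverse] at hx
    rcases hx with hx | hx
    · exact hmemu x hx
    · exact hmemv x hx
  have hztar : G.target zl a = a := by
    rw [hzl, G.target_append, hbv, hb]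
    exact (G.wmap_reverse (altR i j d) a).1
  have hzw : G.wmap zl a = v.trans u.symm := by
    rw [hzl, G.wmap_append, hbv]
    congr 1
    rw [hb, hu]
    exact (G.wmap_reverse (altR i j d) a).2
  -- z preserves positivity
  have hzpos : ∀ β ∈ G.pos a, G.wmap zl a β ∈ G.pos (G.target zl a) := by
    rw [hztar]
    intro β hβ
    rw [hzw]
    show u.symm (v β) ∈ G.pos a
    by_cases hβS : β ∈ G.S2 i j a
    · have h1 : v β ∈ ⇑u '' (G.S2 i j a) := by rw [hUSeq]; exact hVS β hβS
      obtain ⟨γ, hγ, hγe⟩ := h1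
      rw [← hγe, u.symm_apply_apply]
      exact G.S2_subset_pos hij a hγ
    · have hvβroot : v β ∈ G.root b := by
        have := G.wmap_root (l := altR j i d) (a := a) (G.pos_subset_root hβ)
        rwa [hbv] at this
      have hvβpos : v β ∈ G.pos b := by
        rcases G.root_cases hvβroot with h | h
        · exact h
        · exfalso
          have hmem : β ∈ G.inv (altR j i d) a := by
            refine ⟨hβ, ?_⟩
            rw [hbv]
            exact G.mem_neg_pos.mpr h
          rw [hIv] at hmem
          exact hβS hmem
      have hvβnS : v β ∉ G.S2 i j b := by
        intro hmem
        have h1 : -(v β) ∈ -(G.S2 i j b) := by rwa [Set.mem_neg, neg_neg]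
        rw [← hVSeq] at h1
        obtain ⟨γ, hγ, hγe⟩ := h1
        have hγβ : γ = -β := by
          apply v.injective
          rw [hγe, map_neg]
        rw [hγβ] at hγ
        exact G.pos_neg_disj hβ (G.S2_subset_pos hij a hγ)
      have hroot2 : u.symm (v β) ∈ G.root a := by
        refine G.wsymm_root (l := altR i j d) (a := a) ?_
        rw [← hb]
        exact hvβroot
      rcases G.root_cases hroot2 with h | h
      · exact h
      · exfalso
        have hmem : -(u.symm (v β)) ∈ G.inv (altR i j d) a := by
          refine ⟨h, ?_⟩
          have he : G.wmap (altR i j d) a (-(u.symm (v β))) = -(v β) := by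
            rw [← hu, map_neg, u.apply_symm_apply]
          rw [he, ← hb, Set.mem_neg, neg_neg]
          exact hvβpos
        rw [hIu] at hmem
        have h2 : u (-(u.symm (v β))) ∈ ⇑u '' (G.S2 i j a) := ⟨_, hmem, rfl⟩
        rw [hUSeq] at h2
        have h3 : u (-(u.symm (v β))) = -(v β) := by
          rw [map_neg, u.apply_symm_apply]
        rw [h3, Set.mem_neg, neg_neg] at h2
        exact hvβnS h2
  -- all simple roots go to simple roots
  have hsimp : ∀ n, ∃ m, G.wmap zl a (G.α n a) = G.α m (G.target zl a) :=
    fun n => G.image_simple hR hzpos n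
  -- letters outside {i,j} are fixed
  have hofffix : ∀ n, n ≠ i → n ≠ j → G.wmap zl a (G.α n a) = G.α n a := by
    intro n hni hnj
    obtain ⟨m, hm⟩ := hsimp n
    rw [hztar] at hm
    have hcoord := G.wmap_alpha_off hzmem a n n hni hnj
    rw [hztar, hm, G.repr_alpha, G.repr_alpha] at hcoord
    simp only [Finsupp.single_apply, if_pos rfl] at hcoord
    by_cases hmn : m = n
    · rw [hm, hmn]
    · rw [if_neg hmn] at hcoord
      norm_num at hcoord
  -- letters i, j go to {α i, α j}
  have hiscase : ∀ x, x = i ∨ x = j →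
      (G.wmap zl a (G.α x a) = G.α i a ∨ G.wmap zl a (G.α x a) = G.α j a) := by
    intro x hx
    obtain ⟨m, hm⟩ := hsimp x
    rw [hztar] at hm
    have hsp : G.wmap zl a (G.α x a) ∈ G.sp2 i j a := by
      have := G.wmap_sp2 hzmem (G.alpha_mem_sp2 hx a)
      rwa [hztar] at this
    rw [hm] at hsp ⊢
    by_contra hcon
    push_neg at hcon
    have hmi : m ≠ i := fun h => hcon.1 (by rw [h])
    have hmj : m ≠ j := fun h => hcon.2 (by rw [h])
    have := hsp m hmi hmj
    rw [G.repr_alpha] at this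
    simp [Finsupp.single_apply] at this
  -- the determinant is 1
  have hdet : (G.m2 i j (G.wmap zl a) a a).det = 1 := by
    have h0 := G.m2_word_det hij hzmem a
    rw [hztar] at h0
    rw [h0]
    have hlen : zl.length = 2 * d := by
      rw [hzl, List.length_append, List.length_reverse, altR_length, altR_length]
      ring
    rw [hlen]
    exact Even.neg_one_pow ⟨d, by ring⟩
  -- exclude the swap using the determinant
  have hfix : G.wmap zl a (G.α i a) = G.α i a ∧ G.wmap zl a (G.α j a) = G.α j a := by
    have hinj : G.wmap zl a (G.α i a) ≠ G.wmap zl a (G.α j a) := by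
      intro h
      exact hij (G.alpha_injective a ((G.wmap zl a).injective h))
    rcases hiscase i (Or.inl rfl) with h1 | h1 <;> rcases hiscase j (Or.inr rfl) with h2 | h2
    · exact absurd (h1.trans h2.symm) hinj
    · exact ⟨h1, h2⟩
    · exfalso
      rw [Matrix.det_fin_two] at hdet
      simp only [m2, Matrix.cons_val', Matrix.cons_val_zero, Matrix.cons_val_one,
        Matrix.head_cons, Matrix.empty_val', Matrix.cons_val_fin_one, Matrix.head_fin_const,
        Matrix.of_apply] at hdet
      rw [h1, h2, G.repr_alpha, G.repr_alpha] at hdet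
      simp only [Finsupp.single_apply, if_neg (Ne.symm hij), if_neg hij, if_pos rfl] at hdet
      norm_num at hdet
    · exact absurd (h1.trans h2.symm) hinj
  -- z is the identity
  have hzid : G.wmap zl a = LinearEquiv.refl ℝ (N →₀ ℝ) := by
    refine LinearEquiv.toLinearMap_injective (Module.Basis.ext (G.bas a) fun n => ?_)
    simp only [bas_apply, LinearEquiv.coe_coe, LinearEquiv.refl_apply]
    by_cases hni : n = i
    · rw [hni]; exact hfix.1
    by_cases hnj : n = j
    · rw [hnj]; exact hfix.2
    exact hofffix n hni hnj
  rw [hzw] at hzid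
  refine LinearEquiv.toLinearMap_injective (LinearMap.ext fun x => ?_)
  simp only [LinearEquiv.coe_coe]
  have happ : u.symm (v x) = x := by
    have := congrArg (fun (e : (N →₀ ℝ) ≃ₗ[ℝ] (N →₀ ℝ)) => e x) hzid
    simpa using this
  show u x = v x
  calc u x = u (u.symm (v x)) := by rw [happ]
    _ = v x := u.apply_symm_apply _

end Braid
end GRS
namespace GRS
variable {N : Type*} {A : Type*}
section Rank2ML
variable [Fintype N] [Nonempty N] (G : GRS N A)

lemma cons_cons_cancel (z : N) (l : List N) (a : A) :
    G.target (z :: z :: l) a = G.target l a ∧ G.wmap (z :: z :: l) a = G.wmap l a := by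
  constructor
  · simp [G.act_invol]
  · refine LinearEquiv.toLinearMap_injective (LinearMap.ext fun v => ?_)
    simp only [LinearEquiv.coe_coe]
    rw [G.wmap_apply_cons, G.wmap_apply_cons]
    rw [show G.target (z :: l) a = G.act z (G.target l a) from rfl]
    exact G.ax6 z (G.target l a) (G.wmap l a v)

lemma alpha_mem_S2 {i j x : N} (hx : x = i ∨ x = j) (a : A) : G.α x a ∈ G.S2 i j a := by
  refine ⟨G.α_mem x a, ?_⟩
  rcases hx with rfl | rfl
  · exact ⟨1, 0, by simp⟩
  · exact ⟨0, 1, by simp⟩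

lemma one_le_ncard_S2 (hR : ∀ b, (G.root b).Finite) (i j : N) (a : A) :
    1 ≤ (G.S2 i j a).ncard := by
  have := (Set.ncard_pos (G.S2_finite hR i j a)).mpr ⟨G.α i a, G.alpha_mem_S2 (Or.inl rfl) a⟩
  omega

lemma rank2_alt (hR : ∀ b, (G.root b).Finite) {i j : N} (hij : i ≠ j) (a : A) :
    ∀ l : List N, (∀ x ∈ l, x = i ∨ x = j) →
      ∃ x y : N, ((x = i ∧ y = j) ∨ (x = j ∧ y = i)) ∧
        G.target (altR x y ((G.inv l a).ncard)) a = G.target l a ∧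
        G.wmap (altR x y ((G.inv l a).ncard)) a = G.wmap l a := by
  intro l
  induction l with
  | nil =>
    intro _
    have h0 : (G.inv ([] : List N) a).ncard = 0 := by rw [G.inv_nil]; simp
    exact ⟨i, j, Or.inl ⟨rfl, rfl⟩, by rw [h0]; rfl, by rw [h0]; rfl⟩
  | cons z l ih =>
    intro hl
    have hz := hl z List.mem_cons_self
    have hl' : ∀ y ∈ l, y = i ∨ y = j := fun y hy => hl y (List.mem_cons_of_mem z hy)
    obtain ⟨x, y, hxy, htl, hwl⟩ := ih hl'
    obtain ⟨k, hkeq⟩ : ∃ m, (G.inv l a).ncard = m := ⟨_, rfl⟩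
    rw [hkeq] at htl hwl
    have hxyne : x ≠ y := by
      rcases hxy with ⟨rfl, rfl⟩ | ⟨rfl, rfl⟩
      · exact hij
      · exact hij.symm
    have hS2xy : G.S2 x y a = G.S2 i j a := by
      rcases hxy with ⟨rfl, rfl⟩ | ⟨rfl, rfl⟩
      · rfl
      · exact G.S2_comm _ _ a
    have hkd : k ≤ (G.S2 x y a).ncard := by
      rw [hS2xy, ← hkeq]
      exact G.ncard_inv_le_d hR hij hl' a
    have hzxy : z = x ∨ z = y := by
      rcases hxy with ⟨rfl, rfl⟩ | ⟨rfl, rfl⟩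
      · exact hz
      · exact hz.symm
    have htc : G.target (z :: altR x y k) a = G.target (z :: l) a := by
      simp only [target_cons, htl]
    have hwc : G.wmap (z :: altR x y k) a = G.wmap (z :: l) a := by
      rw [wmap_cons, wmap_cons, htl, hwl]
    have hinvc : (G.inv (z :: l) a).ncard = (G.inv (z :: altR x y k) a).ncard := by
      rw [G.inv_congr htc hwc]
    -- helper to produce the result from an equivalent alternating word
    have mk : ∀ x' y' : N, ((x' = x ∧ y' = y) ∨ (x' = y ∧ y' = x)) → ∀ k' : ℕ,
        (G.inv (z :: l) a).ncard = k' →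
        G.target (altR x' y' k') a = G.target (z :: altR x y k) a →
        G.wmap (altR x' y' k') a = G.wmap (z :: altR x y k) a →
        ∃ x'' y'' : N, ((x'' = i ∧ y'' = j) ∨ (x'' = j ∧ y'' = i)) ∧
          G.target (altR x'' y'' ((G.inv (z :: l) a).ncard)) a = G.target (z :: l) a ∧
          G.wmap (altR x'' y'' ((G.inv (z :: l) a).ncard)) a = G.wmap (z :: l) a := by
      intro x' y' hxy' k' hcount ht' hw'
      refine ⟨x', y', ?_, ?_, ?_⟩
      · rcases hxy' with ⟨rfl, rfl⟩ | ⟨rfl, rfl⟩ <;>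
          rcases hxy with ⟨rfl, rfl⟩ | ⟨rfl, rfl⟩ <;> simp
      · rw [hcount, ht', htc]
      · rw [hcount, hw', hwc]
    rcases Nat.eq_zero_or_pos k with rfl | hkpos
    · -- k = 0 : the word is a single letter
      have hcount : (G.inv (z :: l) a).ncard = 1 := by
        rw [hinvc]
        have hγ : (G.wmap (altR x y 0) a).symm (G.α z (G.target (altR x y 0) a)) ∈ G.pos a := by
          show (G.wmap ([] : List N) a).symm (G.α z a) ∈ G.pos a
          exact G.alpha_mem_pos a z
        rw [G.inv_cons_ncard_pos hR hγ]
        rw [show altR x y 0 = ([] : List N) from rfl, G.inv_nil]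
        simp
      rcases hzxy with rfl | rfl
      · exact mk z y (Or.inl ⟨rfl, rfl⟩) 1 hcount rfl rfl
      · exact mk z x (Or.inr ⟨rfl, rfl⟩) 1 hcount rfl rfl
    · -- k ≥ 1
      obtain ⟨k'', rfl⟩ : ∃ k'', k = k'' + 1 := ⟨k - 1, by omega⟩
      have hconsk : altR x y (k'' + 1) = (if Even k'' then x else y) :: altR x y k'' :=
        altR_cons k'' x y
      set w₀ := if Even k'' then x else y with hw₀
      have hw₀xy : w₀ = x ∨ w₀ = y := by
        rw [hw₀]; split <;> simp
      by_cases hzw : z = w₀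
      · -- cancellation
        subst hzw
        have hcancel := G.cons_cons_cancel w₀ (altR x y k'') a
        have ht2 : G.target (altR x y k'') a = G.target (w₀ :: altR x y (k'' + 1)) a := by
          rw [hconsk]
          exact hcancel.1.symm
        have hw2 : G.wmap (altR x y k'') a = G.wmap (w₀ :: altR x y (k'' + 1)) a := by
          rw [hconsk]
          exact hcancel.2.symm
        have hcount : (G.inv (w₀ :: l) a).ncard = k'' := by
          rw [hinvc, ← G.inv_congr ht2 hw2]
          exact (G.alt_inv hR hxyne a k'' (by omega)).1
        exact mk x y (Or.inl ⟨rfl, rfl⟩) k'' hcount ht2 hw2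
      · -- z is the other letter
        have hzother : z = (if Even (k'' + 1) then x else y) := by
          rcases Nat.even_or_odd k'' with he | he
          · rw [if_neg (by simp [Nat.even_add_one, he])]
            rcases hzxy with rfl | rfl
            · exfalso; exact hzw (by rw [hw₀, if_pos he])
            · rfl
          · rw [if_pos (Odd.add_one he)]
            rcases hzxy with rfl | rfl
            · rfl
            · exfalso; exact hzw (by rw [hw₀, if_neg (Nat.not_even_iff_odd.mpr he)])
        by_cases hkd2 : k'' + 1 < (G.S2 x y a).ncard
        · -- extend the alternating word
          have hext : altR x y (k'' + 2) = z :: altR x y (k'' + 1) := by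
            rw [altR_cons (k'' + 1) x y, ← hzother]
          have hcount : (G.inv (z :: l) a).ncard = k'' + 2 := by
            rw [hinvc, ← G.inv_congr (l := z :: altR x y (k'' + 1)) rfl rfl]
            rw [show G.inv (z :: altR x y (k'' + 1)) a = G.inv (altR x y (k'' + 2)) a by
              rw [hext]]
            exact (G.alt_inv hR hxyne a (k'' + 2) (by omega)).1
          refine mk x y (Or.inl ⟨rfl, rfl⟩) (k'' + 2) hcount ?_ ?_
          · rw [hext]
          · rw [hext]
        · -- at the top: use the braid relation
          have hktop : k'' + 1 = (G.S2 x y a).ncard := by omega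
          have hbraid := G.braid hR hxyne a
          rw [← hktop] at hbraid
          -- transfer along the braid
          have htb : G.target (z :: altR y x (k'' + 1)) a = G.target (z :: altR x y (k'' + 1)) a := by
            simp only [target_cons, hbraid.1]
          have hwb : G.wmap (z :: altR y x (k'' + 1)) a = G.wmap (z :: altR x y (k'' + 1)) a := by
            rw [wmap_cons, wmap_cons, hbraid.1, hbraid.2]
          -- leftmost letter of altR y x (k''+1) is z
          have hconsyx : altR y x (k'' + 1) = z :: altR y x k'' := by
            rw [altR_cons k'' y x]
            congr 1
            rw [hzother]
            rcases Nat.even_or_odd k'' with he | he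
            · rw [if_pos he, if_neg (by simp [Nat.even_add_one, he])]
            · rw [if_neg (Nat.not_even_iff_odd.mpr he), if_pos (Odd.add_one he)]
          have hcancel := G.cons_cons_cancel z (altR y x k'') a
          have ht2 : G.target (altR y x k'') a = G.target (z :: altR x y (k'' + 1)) a := by
            rw [← htb, hconsyx]
            exact hcancel.1.symm
          have hw2 : G.wmap (altR y x k'') a = G.wmap (z :: altR x y (k'' + 1)) a := by
            rw [← hwb, hconsyx]
            exact hcancel.2.symm
          have hcount : (G.inv (z :: l) a).ncard = k'' := by
            rw [hinvc, ← G.inv_congr ht2 hw2]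
            have hS2yx : (G.S2 y x a).ncard = (G.S2 x y a).ncard := by
              rw [G.S2_comm]
            exact (G.alt_inv hR hxyne.symm a k'' (by omega)).1
          refine mk y x (Or.inr ⟨rfl, rfl⟩) k'' hcount ht2 hw2

lemma rank2_ml (hR : ∀ b, (G.root b).Finite) {i j : N} (hij : i ≠ j) (a : A)
    (l : List N) (hl : ∀ x ∈ l, x = i ∨ x = j) :
    ∃ l' : List N, l'.length = (G.inv l a).ncard ∧
      G.target l' a = G.target l a ∧ G.wmap l' a = G.wmap l a := by
  obtain ⟨x, y, _, ht, hw⟩ := G.rank2_alt hR hij a l hl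
  exact ⟨altR x y ((G.inv l a).ncard), altR_length _ x y, ht, hw⟩

end Rank2ML
end GRS
namespace GRS
variable {N : Type*} {A : Type*}

/-- Objects along an appended run of letters. -/
def runA (act : N → A → A) (x : ℕ → N) (a : A) : ℕ → A
  | 0 => a
  | k + 1 => act (x (k + 1)) (runA act x a k)

/-- The appended suffix word. -/
def sfxL (x : ℕ → N) : ℕ → List N
  | 0 => []
  | k + 1 => sfxL x k ++ [x (k + 1)]

section FL
variable [Fintype N] [Nonempty N] (G : GRS N A)

lemma target_sfx (x : ℕ → N) (a : A) : ∀ k, G.target (sfxL x k) (runA G.act x a k) = a := by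
  intro k
  induction k with
  | zero => rfl
  | succ k ih =>
    show G.target (sfxL x k ++ [x (k + 1)]) (runA G.act x a (k + 1)) = a
    rw [G.target_append_singleton]
    have h1 : G.act (x (k + 1)) (runA G.act x a (k + 1)) = runA G.act x a k := G.act_invol _ _
    rw [h1, ih]

lemma sfx_mem (x : ℕ → N) {S : Set N} (hx : ∀ k, x k ∈ S) : ∀ k, ∀ y ∈ sfxL x k, y ∈ S := by
  intro k
  induction k with
  | zero => intro y hy; simp [sfxL] at hy
  | succ k ih =>
    intro y hy
    simp only [sfxL, List.mem_append, List.mem_singleton] at hy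
    rcases hy with hy | rfl
    · exact ih y hy
    · exact hx _

lemma sfx_length (x : ℕ → N) : ∀ k, (sfxL x k).length = k := by
  intro k
  induction k with
  | zero => rfl
  | succ k ih => show (sfxL x k ++ [x (k+1)]).length = k + 1; simp [ih]

/-- The fundamental lemma: if appending `s` increases the length, then the
word maps `α s` to a positive root. -/
lemma FL (hR : ∀ b, (G.root b).Finite) :
    ∀ q : ℕ, ∀ (a : A) (l : List N) (s : N), G.len l a = q →
      G.len (l ++ [s]) (G.act s a) = q + 1 →
      G.wmap l a (G.α s a) ∈ G.pos (G.target l a) := by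
  intro q
  induction q using Nat.strong_induction_on with
  | _ q IH =>
  intro a l s hq hq1
  by_contra hcon
  have hroot : G.wmap l a (G.α s a) ∈ G.root (G.target l a) := G.wmap_root (G.α_mem s a)
  have hneg : G.wmap l a (G.α s a) ∈ -(G.pos (G.target l a)) := by
    rcases G.root_cases hroot with h | h
    · exact absurd h hcon
    · exact G.mem_neg_pos.mpr h
  rcases Nat.eq_zero_or_pos q with rfl | hqpos
  · -- the length-0 case: the word is trivial
    obtain ⟨r, hr, ht, hw⟩ := G.len_spec l a
    rw [hq] at hr
    have hrnil : r = [] := List.length_eq_zero_iff.mp hr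
    subst hrnil
    have hta : G.target l a = a := ht.symm
    have hwa : G.wmap l a (G.α s a) = G.α s a := by rw [← hw]; rfl
    rw [hta, hwa] at hneg
    exact G.pos_neg_disj (G.alpha_mem_pos a s) (G.mem_neg_pos.mp hneg)
  -- q ≥ 1 : strip the last letter of a reduced word
  obtain ⟨t, hts⟩ := G.len_strip hR (l := l) (a := a) (by omega : 0 < G.len l a)
  rw [hq] at hts
  have hst : t ≠ s := by
    rintro rfl
    rw [hq1] at hts
    omega
  -- the alternating run
  set x : ℕ → N := fun k => if Odd k then t else s with hx
  have hx1 : x 1 = t := by rw [hx]; simp [Nat.odd_iff]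
  have hxmem : ∀ k, x k = t ∨ x k = s := by
    intro k; rw [hx]; dsimp only; split <;> simp
  set P : ℕ → ℕ := fun k => G.len (l ++ sfxL x k) (runA G.act x a k) with hP
  have hP0 : P 0 = q := by
    rw [hP]
    show G.len (l ++ []) a = q
    rw [List.append_nil]; exact hq
  have hP1 : P 1 + 1 = q := by
    rw [hP]
    show G.len (l ++ ([] ++ [x 1])) (G.act (x 1) a) + 1 = q
    rw [List.nil_append, hx1]
    exact hts
  have hdich : ∀ k, P (k + 1) = P k + 1 ∨ P k = P (k + 1) + 1 := by
    intro k
    have h0 := G.len_append_cases hR (l ++ sfxL x k) (x (k + 1)) (runA G.act x a (k + 1))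
    have e1 : (l ++ sfxL x k) ++ [x (k + 1)] = l ++ sfxL x (k + 1) := by
      rw [List.append_assoc]; rfl
    have e2 : G.act (x (k + 1)) (runA G.act x a (k + 1)) = runA G.act x a k := G.act_invol _ _
    rw [e1, e2] at h0
    exact h0
  have hD : ∃ k, P (k + 1) = P k + 1 := by
    by_contra hno
    push_neg at hno
    have hdesc : ∀ k, P k + k = q := by
      intro k
      induction k with
      | zero => simpa using hP0
      | succ k ih =>
        rcases hdich k with h | h
        · exact absurd h (hno k)
        · omega
    have h1 := hdesc q
    have h2 := hdesc (q + 1)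
    omega
  set kst := Nat.find hD with hkst
  have hDk : P (kst + 1) = P kst + 1 := Nat.find_spec hD
  have hnoD : ∀ m, m < kst → ¬(P (m + 1) = P m + 1) := fun m hm => Nat.find_min hD hm
  have hdesc : ∀ m, m ≤ kst → P m + m = q := by
    intro m
    induction m with
    | zero => intro _; simpa using hP0
    | succ m ih =>
      intro hm
      have h1 := ih (by omega)
      rcases hdich m with h | h
      · exact absurd h (hnoD m (by omega))
      · omega
  have hkpos : 1 ≤ kst := by
    rcases Nat.eq_zero_or_pos kst with h0 | h1
    · exfalso
      rw [h0] at hDk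
      simp only [Nat.zero_add] at hDk
      have := hP1
      have := hP0
      omega
    · exact h1
  have hPkst : P kst + kst = q := hdesc kst le_rfl
  -- apply the induction hypothesis to both letters at the turning point
  have hbt : G.target (l ++ sfxL x kst) (runA G.act x a kst) = G.target l a := by
    rw [G.target_append, G.target_sfx]
  have hIH1 : G.wmap (l ++ sfxL x kst) (runA G.act x a kst)
      (G.α (x (kst + 1)) (runA G.act x a kst)) ∈ G.pos (G.target l a) := by
    rw [← hbt]
    refine IH (P kst) (by omega) _ _ _ rfl ?_
    have e1 : (l ++ sfxL x kst) ++ [x (kst + 1)] = l ++ sfxL x (kst + 1) := by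
      rw [List.append_assoc]; rfl
    have e2 : G.act (x (kst + 1)) (runA G.act x a kst) = runA G.act x a (kst + 1) := rfl
    rw [e1, e2]
    exact hDk
  have hIH2 : G.wmap (l ++ sfxL x kst) (runA G.act x a kst)
      (G.α (x kst) (runA G.act x a kst)) ∈ G.pos (G.target l a) := by
    rw [← hbt]
    refine IH (P kst) (by omega) _ _ _ rfl ?_
    -- the appended word cancels to the previous stage
    obtain ⟨k1, hk1⟩ : ∃ k1, kst = k1 + 1 := ⟨kst - 1, by omega⟩
    have e2 : G.act (x kst) (runA G.act x a kst) = runA G.act x a k1 := by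
      rw [hk1]; exact G.act_invol _ _
    rw [e2]
    have hlen_eq : G.len ((l ++ sfxL x kst) ++ [x kst]) (runA G.act x a k1) =
        G.len (l ++ sfxL x k1) (runA G.act x a k1) := by
      refine G.len_congr ?_ ?_
      · -- targets agree
        rw [G.target_append_singleton]
        have e3 : G.act (x kst) (runA G.act x a k1) = runA G.act x a kst := by
          rw [hk1]; rfl
        rw [e3, G.target_append, G.target_sfx, G.target_append, G.target_sfx]
      · -- maps agree
        refine G.wmap_eq_of_apply fun β => ?_
        rw [G.wmap_append_singleton]
        have e3 : G.act (x kst) (runA G.act x a k1) = runA G.act x a kst := by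
          rw [hk1]; rfl
        rw [e3]
        have e4 : l ++ sfxL x kst = (l ++ sfxL x k1) ++ [x kst] := by
          rw [List.append_assoc, hk1]; rfl
        rw [e4, G.wmap_append_singleton]
        have e5 : G.act (x kst) (runA G.act x a kst) = runA G.act x a k1 := e2
        rw [e5]
        congr 1
        have := G.ax6 (x kst) (runA G.act x a k1)
        have e6 : G.act (x kst) (runA G.act x a k1) = runA G.act x a kst := by
          rw [hk1]; rfl
        rw [e6] at this
        exact this β
    rw [hlen_eq]
    have h1 : P k1 = P kst + 1 := by
      have ha := hdesc k1 (by omega)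
      have hb := hPkst
      omega
    exact h1
  -- both α s and α t are sent to positive roots at the turning point
  have hvst : G.wmap (l ++ sfxL x kst) (runA G.act x a kst)
      (G.α s (runA G.act x a kst)) ∈ G.pos (G.target l a) ∧
      G.wmap (l ++ sfxL x kst) (runA G.act x a kst)
      (G.α t (runA G.act x a kst)) ∈ G.pos (G.target l a) := by
    rcases Nat.even_or_odd kst with he | he
    · have h1 : x kst = s := by
        rw [hx]; dsimp only; rw [if_neg (Nat.not_odd_iff_even.mpr he)]
      have h2 : x (kst + 1) = t := by
        rw [hx]; dsimp only; rw [if_pos (Even.add_one he)]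
      exact ⟨h1 ▸ hIH2, h2 ▸ hIH1⟩
    · have h1 : x kst = t := by rw [hx]; dsimp only; rw [if_pos he]
      have h2 : x (kst + 1) = s := by
        rw [hx]; dsimp only
        rw [if_neg (Nat.not_odd_iff_even.mpr (Odd.add_one he))]
      exact ⟨h2 ▸ hIH1, h1 ▸ hIH2⟩
  obtain ⟨hvs, hvt⟩ := hvst
  -- the reversed suffix word from a to `run kst`
  have hrev := G.wmap_reverse (sfxL x kst) (runA G.act x a kst)
  rw [G.target_sfx] at hrev
  set rl := (sfxL x kst).reverse with hrl
  have hrlmem : ∀ y ∈ rl, y = s ∨ y = t := by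
    intro y hy
    rw [hrl, List.mem_reverse] at hy
    exact sfx_mem x (S := {z | z = s ∨ z = t})
      (fun k => (hxmem k).symm.imp (fun h => h) (fun h => h)) kst y hy
  have hrltar : G.target rl a = runA G.act x a kst := hrev.1
  have hkey : ∀ β, G.wmap (l ++ sfxL x kst) (runA G.act x a kst) (G.wmap rl a β) =
      G.wmap l a β := by
    intro β
    rw [G.wmap_append]
    simp only [LinearEquiv.trans_apply]
    rw [G.target_sfx]
    congr 1
    rw [show G.wmap rl a = (G.wmap (sfxL x kst) (runA G.act x a kst)).symm from hrev.2]
    exact LinearEquiv.apply_symm_apply _ _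
  set zz := G.wmap rl a (G.α s a) with hzz
  have hzroot : zz ∈ G.root (runA G.act x a kst) := by
    rw [hzz, ← hrltar]; exact G.wmap_root (G.α_mem s a)
  have hzsp : zz ∈ G.sp2 s t (runA G.act x a kst) := by
    rw [hzz, ← hrltar]
    exact G.wmap_sp2 (i := s) (j := t) hrlmem (G.alpha_mem_sp2 (Or.inl rfl) a)
  rcases G.root_sp2_cases (Ne.symm hst) hzroot hzsp with hpos2 | hneg2
  · -- zz is a nonnegative combination: positivity, contradicting hcon
    obtain ⟨-, p, p', hzeq⟩ := hpos2
    apply hcon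
    have hmain : G.wmap l a (G.α s a) =
        (p : ℝ) • (G.wmap (l ++ sfxL x kst) (runA G.act x a kst)
          (G.α s (runA G.act x a kst))) +
        (p' : ℝ) • (G.wmap (l ++ sfxL x kst) (runA G.act x a kst)
          (G.α t (runA G.act x a kst))) := by
      rw [← hkey (G.α s a), ← hzz, hzeq, map_add, map_smul, map_smul]
    refine G.pos_of_nonneg_coords hroot fun n => ?_
    rw [hmain]
    simp only [map_add, map_smul, Finsupp.coe_add, Finsupp.coe_smul, Pi.add_apply,
      Pi.smul_apply, smul_eq_mul]
    have hc1 := G.pos_coord_nonneg hvs n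
    have hc2 := G.pos_coord_nonneg hvt n
    have hp : (0:ℝ) ≤ p := by positivity
    have hp' : (0:ℝ) ≤ p' := by positivity
    nlinarith
  · -- zz is negative: produce a short word for l ++ [s], contradiction with hq1
    have hzneg : zz ∈ -(G.pos (runA G.act x a kst)) :=
      G.mem_neg_pos.mpr (G.S2_subset_pos (Ne.symm hst) _ hneg2)
    have hinvneg : (G.inv (rl ++ [s]) (G.act s a)).ncard + 1 =
        (G.inv rl (G.act s (G.act s a))).ncard := by
      refine G.inv_append_ncard_neg hR ?_
      rw [G.act_invol, hrltar]
      exact hzneg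
    rw [G.act_invol] at hinvneg
    have hrl_len : (G.inv rl a).ncard ≤ kst := by
      have h0 := G.ncard_inv_le_length hR rl a
      rw [hrl, List.length_reverse, sfx_length] at h0
      exact h0
    have hmem2 : ∀ y ∈ rl ++ [s], y = s ∨ y = t := by
      intro y hy
      rw [List.mem_append, List.mem_singleton] at hy
      rcases hy with hy | rfl
      · exact hrlmem y hy
      · exact Or.inl rfl
    obtain ⟨l₂, hl₂len, hl₂t, hl₂w⟩ := G.rank2_ml hR (Ne.symm hst) (G.act s a) (rl ++ [s]) hmem2
    obtain ⟨rv, hrvlen, hrvt, hrvw⟩ := G.len_spec (l ++ sfxL x kst) (runA G.act x a kst)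
    have htl₂ : G.target l₂ (G.act s a) = runA G.act x a kst := by
      rw [hl₂t, G.target_append_singleton, G.act_invol, hrltar]
    have hcomb_t : G.target (rv ++ l₂) (G.act s a) = G.target (l ++ [s]) (G.act s a) := by
      rw [G.target_append, htl₂, hrvt, hbt, G.target_append_singleton, G.act_invol]
    have hcomb_w : G.wmap (rv ++ l₂) (G.act s a) = G.wmap (l ++ [s]) (G.act s a) := by
      refine G.wmap_eq_of_apply fun β => ?_
      rw [G.wmap_append]
      simp only [LinearEquiv.trans_apply]
      rw [htl₂, hrvw]
      have hstep1 : G.wmap l₂ (G.act s a) β = G.wmap rl a (G.σ s (G.act s a) β) := by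
        rw [hl₂w, G.wmap_append_singleton, G.act_invol]
      rw [hstep1, hkey, G.wmap_append_singleton, G.act_invol]
    have hlenle : G.len (l ++ [s]) (G.act s a) ≤ (rv ++ l₂).length := by
      rw [← G.len_congr hcomb_t hcomb_w]
      exact G.len_le_length _ _
    rw [List.length_append, hrvlen, hl₂len] at hlenle
    have hPdef : P kst = G.len (l ++ sfxL x kst) (runA G.act x a kst) := rfl
    rw [hq1] at hlenle
    omega

end FL
end GRS
namespace GRS
variable {N : Type*} {A : Type*}
section Rigid
variable [Fintype N] [Nonempty N] (G : GRS N A)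

lemma len_succ_of_pos (hR : ∀ b, (G.root b).Finite) {a : A} {l : List N} {s : N}
    (h : G.wmap l a (G.α s a) ∈ G.pos (G.target l a)) :
    G.len (l ++ [s]) (G.act s a) = G.len l a + 1 := by
  have h0 := G.len_append_cases hR l s (G.act s a)
  rw [G.act_invol] at h0
  rcases h0 with h1 | h1
  · exact h1
  · exfalso
    have hmid : G.len ((l ++ [s]) ++ [s]) (G.act s (G.act s a)) = G.len l a := by
      rw [G.act_invol]
      refine G.len_congr ?_ ?_
      · rw [G.target_append_singleton, G.target_append_singleton, G.act_invol]
      · refine G.wmap_eq_of_apply fun β => ?_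
        rw [G.wmap_append_singleton, G.wmap_append_singleton, G.act_invol, G.ax6]
    have hFL := G.FL hR (G.len (l ++ [s]) (G.act s a)) (G.act s a) (l ++ [s]) s rfl
      (by rw [hmid]; omega)
    have hcomp : G.wmap (l ++ [s]) (G.act s a) (G.α s (G.act s a)) =
        -(G.wmap l a (G.α s a)) := by
      rw [G.wmap_append_singleton, G.act_invol, G.ax5_diag, G.act_invol, map_neg]
    have htt : G.target (l ++ [s]) (G.act s a) = G.target l a := by
      rw [G.target_append_singleton, G.act_invol]
    rw [hcomp, htt] at hFL
    exact G.pos_neg_disj h hFL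

lemma rigid (hR : ∀ b, (G.root b).Finite) {l : List N} {a : A}
    (h : ∀ β ∈ G.pos a, G.wmap l a β ∈ G.pos (G.target l a)) :
    G.target l a = a ∧ G.wmap l a = LinearEquiv.refl ℝ (N →₀ ℝ) := by
  rcases Nat.eq_zero_or_pos (G.len l a) with h0 | hpos
  · obtain ⟨r, hr, ht, hw⟩ := G.len_spec l a
    rw [h0] at hr
    have : r = [] := List.length_eq_zero_iff.mp hr
    subst this
    exact ⟨ht.symm, hw.symm⟩
  · exfalso
    obtain ⟨t, hts⟩ := G.len_strip hR hpos
    have := G.len_succ_of_pos hR (h _ (G.alpha_mem_pos a t))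
    omega

lemma inv_empty_of_all_pos {l : List N} {a : A}
    (hall : ∀ i, (G.wmap l a).symm (G.α i (G.target l a)) ∈ G.pos a) : G.inv l a = ∅ := by
  classical
  ext β
  simp only [Set.mem_empty_iff_false, iff_false]
  rintro ⟨hβ, hn⟩
  set b := G.target l a with hb
  set w := G.wmap l a with hw
  have hwβ : -(w β) ∈ G.pos b := G.mem_neg_pos.mp hn
  choose f hf using (G.mem_pos_iff.mp hwβ).2
  have hβeq : β = -(∑ k, (f k : ℝ) • w.symm (G.α k b)) := by
    have h1 : -(w β) = ∑ k, (f k : ℝ) • G.α k b := by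
      conv_lhs => rw [← (G.bas b).sum_repr (-(w β))]
      refine Finset.sum_congr rfl fun k _ => ?_
      rw [hf k, bas_apply]
    have h2 : w β = -(∑ k, (f k : ℝ) • G.α k b) := by rw [← h1, neg_neg]
    calc β = w.symm (w β) := (w.symm_apply_apply β).symm
      _ = -(∑ k, (f k : ℝ) • w.symm (G.α k b)) := by
          rw [h2, map_neg, map_sum]
          congr 1
          exact Finset.sum_congr rfl fun k _ => by rw [map_smul]
  have hcoord : ∀ n, (G.bas a).repr β n ≤ 0 := by
    intro n
    rw [hβeq]
    simp only [map_neg, map_sum, map_smul, Finsupp.coe_neg, Pi.neg_apply,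
      Finsupp.coe_finset_sum, Finset.sum_apply, Finsupp.coe_smul, Pi.smul_apply, smul_eq_mul]
    have : (0:ℝ) ≤ ∑ k, (f k : ℝ) * (G.bas a).repr (w.symm (G.α k b)) n := by
      refine Finset.sum_nonneg fun k _ => ?_
      have h1 := G.pos_coord_nonneg (hall k) n
      positivity
    linarith
  have hzero : β = 0 := G.eq_zero_of_coords fun n =>
    le_antisymm (hcoord n) (G.pos_coord_nonneg hβ n)
  exact G.zero_notMem_root a (hzero ▸ G.pos_subset_root hβ)

lemma inv_full_of_all_neg {l : List N} {a : A}
    (hall : ∀ i, -((G.wmap l a).symm (G.α i (G.target l a))) ∈ G.pos a) :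
    G.inv l a = G.pos a := by
  classical
  refine Set.Subset.antisymm (G.inv_subset_pos l a) ?_
  intro β hβ
  refine ⟨hβ, ?_⟩
  set b := G.target l a with hb
  set w := G.wmap l a with hw
  have hroot : w β ∈ G.root b := G.wmap_root (G.pos_subset_root hβ)
  rcases G.root_cases hroot with h | h
  · exfalso
    choose f hf using (G.mem_pos_iff.mp h).2
    have hβeq : β = ∑ k, (f k : ℝ) • w.symm (G.α k b) := by
      have h1 : w β = ∑ k, (f k : ℝ) • G.α k b := by
        conv_lhs => rw [← (G.bas b).sum_repr (w β)]
        refine Finset.sum_congr rfl fun k _ => ?_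
        rw [hf k, bas_apply]
      calc β = w.symm (w β) := (w.symm_apply_apply β).symm
        _ = ∑ k, (f k : ℝ) • w.symm (G.α k b) := by
            rw [h1, map_sum]
            exact Finset.sum_congr rfl fun k _ => by rw [map_smul]
    have hcoord : ∀ n, (G.bas a).repr β n ≤ 0 := by
      intro n
      rw [hβeq]
      simp only [map_sum, map_smul, Finsupp.coe_finset_sum, Finset.sum_apply,
        Finsupp.coe_smul, Pi.smul_apply, smul_eq_mul]
      refine Finset.sum_nonpos fun k _ => ?_
      have h1 := G.neg_pos_coord_nonpos (hall k) n
      have h2 : (0:ℝ) ≤ f k := by positivity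
      exact mul_nonpos_of_nonneg_of_nonpos h2 h1
    have hzero : β = 0 := G.eq_zero_of_coords fun n =>
      le_antisymm (hcoord n) (G.pos_coord_nonneg hβ n)
    exact G.zero_notMem_root a (hzero ▸ G.pos_subset_root hβ)
  · exact G.mem_neg_pos.mpr h

lemma ML (hR : ∀ b, (G.root b).Finite) :
    ∀ (n : ℕ) (l : List N) (a : A), (G.inv l a).ncard = n →
      ∃ l', l'.length = n ∧ G.target l' a = G.target l a ∧ G.wmap l' a = G.wmap l a := by
  intro n
  induction n with
  | zero =>
    intro l a h0
    have hinv : G.inv l a = ∅ := ((Set.ncard_eq_zero (G.inv_finite hR l a)).mp h0)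
    have hpos : ∀ β ∈ G.pos a, G.wmap l a β ∈ G.pos (G.target l a) := by
      intro β hβ
      rcases G.root_cases (G.wmap_root (G.pos_subset_root hβ)) with h | h
      · exact h
      · exfalso
        have hmem : β ∈ G.inv l a := ⟨hβ, G.mem_neg_pos.mpr h⟩
        rw [hinv] at hmem
        exact hmem
    obtain ⟨ht, hw⟩ := G.rigid hR hpos
    exact ⟨[], rfl, by rw [ht]; rfl, hw.symm⟩
  | succ n ihn =>
    intro l a hcard
    have hex : ∃ i, -((G.wmap l a).symm (G.α i (G.target l a))) ∈ G.pos a := by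
      by_contra hno
      push_neg at hno
      have hall : ∀ i, (G.wmap l a).symm (G.α i (G.target l a)) ∈ G.pos a := by
        intro i
        rcases G.gamma_dichotomy l a i with h | h
        · exact h
        · exact absurd h (hno i)
      have := G.inv_empty_of_all_pos hall
      rw [this] at hcard
      simp at hcard
    obtain ⟨i, hi⟩ := hex
    have hcount : (G.inv (i :: l) a).ncard = n := by
      have := G.inv_cons_ncard_neg hR hi
      omega
    obtain ⟨l₂, hl₂len, hl₂t, hl₂w⟩ := ihn (i :: l) a hcount
    refine ⟨i :: l₂, by simp [hl₂len], ?_, ?_⟩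
    · rw [target_cons, hl₂t, target_cons, G.act_invol]
    · refine G.wmap_eq_of_apply fun β => ?_
      rw [G.wmap_apply_cons, hl₂t, hl₂w]
      rw [show G.wmap (i :: l) a β = G.σ i (G.target l a) (G.wmap l a β) from rfl]
      rw [show G.target (i :: l) a = G.act i (G.target l a) from rfl]
      exact G.ax6 i (G.target l a) (G.wmap l a β)

lemma exists_full (hR : ∀ b, (G.root b).Finite) (a : A) :
    ∀ (m : ℕ) (l : List N), l.length = (G.inv l a).ncard →
      (G.inv l a).ncard + m = (G.pos a).ncard →
      ∃ l', l'.length = (G.pos a).ncard ∧ (G.inv l' a).ncard = (G.pos a).ncard := by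
  intro m
  induction m with
  | zero =>
    intro l hlen hsum
    exact ⟨l, by omega, by omega⟩
  | succ m ihm =>
    intro l hlen hsum
    have hex : ∃ i, (G.wmap l a).symm (G.α i (G.target l a)) ∈ G.pos a := by
      by_contra hno
      push_neg at hno
      have hall : ∀ i, -((G.wmap l a).symm (G.α i (G.target l a))) ∈ G.pos a := by
        intro i
        rcases G.gamma_dichotomy l a i with h | h
        · exact absurd h (hno i)
        · exact h
      have := G.inv_full_of_all_neg hall
      rw [this] at hsum
      omega
    obtain ⟨i, hi⟩ := hex
    have hcount := G.inv_cons_ncard_pos hR hi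
    refine ihm (i :: l) (by simp [hcount]; omega) (by omega)

end Rigid
end GRS
/-- if `R_a` is finite for some `a`, then `A` is finite and for each `a`:
reduced words at `a` have length at most `|R⁺_a|`, there is a reduced word at `a` of
length exactly `|R⁺_a|`, and any two such have the same target and σ-composite. -/
theorem stmt16 [Nonempty N] [Nonempty A] (G : GRS N A)
    (hfin : ∃ a : A, (G.root a).Finite) :
    Finite A ∧ ∀ a : A,
      (∀ l : List N, G.Reduced l a → l.length ≤ (G.pos a).ncard) ∧
      (∃ l : List N, G.Reduced l a ∧ l.length = (G.pos a).ncard) ∧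
      (∀ l l' : List N, G.Reduced l a → G.Reduced l' a →
        l.length = (G.pos a).ncard → l'.length = (G.pos a).ncard →
        G.target l a = G.target l' a ∧ G.wmap l a = G.wmap l' a) := by
  classical
  obtain ⟨a₀, ha₀⟩ := hfin
  have hNfin : Finite N := by
    have : Finite ↥(G.root a₀) := ha₀.to_subtype
    refine Finite.of_injective (fun n => (⟨G.α n a₀, G.α_mem n a₀⟩ : ↥(G.root a₀))) ?_
    intro n m h
    have : G.α n a₀ = G.α m a₀ := congrArg Subtype.val h
    exact (G.α_indep a₀).injective this
  cases nonempty_fintype N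
  have hR : ∀ b, (G.root b).Finite := G.root_finite_all ⟨a₀, ha₀⟩
  -- the key consequence of ML: len is bounded by the inversion number
  have hlen_le_inv : ∀ (l : List N) (a : A), G.len l a ≤ (G.inv l a).ncard := by
    intro l a
    obtain ⟨l', hlen', ht', hw'⟩ := G.ML hR _ l a rfl
    rw [← hlen', ← G.len_congr ht' hw']
    exact G.len_le_length _ _
  have hinv_le_pos : ∀ (l : List N) (a : A), (G.inv l a).ncard ≤ (G.pos a).ncard :=
    fun l a => Set.ncard_le_ncard (G.inv_subset_pos l a) (G.pos_finite hR a)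
  constructor
  · -- A is finite
    have hsurj : ∀ b : A, ∃ l ∈ {l : List N | l.length ≤ (G.pos a₀).ncard},
        G.target l a₀ = b := by
      intro b
      obtain ⟨l, hl⟩ := G.act_trans a₀ b
      obtain ⟨l', hl'len, hl't, _⟩ := G.ML hR _ l a₀ rfl
      refine ⟨l', ?_, by rw [hl't]; exact hl⟩
      rw [Set.mem_setOf_eq, hl'len]
      exact hinv_le_pos l a₀
    have hcover : (Set.univ : Set A) ⊆
        (fun l : List N => G.target l a₀) '' {l | l.length ≤ (G.pos a₀).ncard} := by
      intro b _
      obtain ⟨l, hl1, hl2⟩ := hsurj b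
      exact ⟨l, hl1, hl2⟩
    have hfinA : (Set.univ : Set A).Finite :=
      ((List.finite_length_le N ((G.pos a₀).ncard)).image _).subset hcover
    exact Set.finite_univ_iff.mp hfinA
  · intro a
    have hfull : ∀ m : List N, G.Reduced m a → m.length = (G.pos a).ncard →
        G.inv m a = G.pos a := by
      intro m hm hmlen
      have h1 := hinv_le_pos m a
      have h2 := hlen_le_inv m a
      rw [GRS.Reduced] at hm
      have h3 : (G.inv m a).ncard = (G.pos a).ncard := by omega
      exact Set.eq_of_subset_of_ncard_le (G.inv_subset_pos m a) (le_of_eq h3.symm)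
        (G.pos_finite hR a)
    refine ⟨?_, ?_, ?_⟩
    · -- (1) reduced words are short
      intro l hred
      have h1 := hlen_le_inv l a
      have h2 := hinv_le_pos l a
      rw [GRS.Reduced] at hred
      omega
    · -- (2) existence of a longest reduced word
      obtain ⟨l', hlen, hinv⟩ := G.exists_full hR a ((G.pos a).ncard) []
        (by rw [G.inv_nil]; simp) (by rw [G.inv_nil]; simp)
      refine ⟨l', ?_, hlen⟩
      have h1 : G.len l' a ≤ l'.length := G.len_le_length l' a
      have h2 : (G.inv l' a).ncard ≤ G.len l' a := G.ncard_inv_le_len hR l' a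
      rw [GRS.Reduced]
      omega
    · -- (3) uniqueness of the longest element
      intro l l' hred hred' hlen hlen'
      have hfl := hfull l hred hlen
      have hfl' := hfull l' hred' hlen'
      have hrev := G.wmap_reverse l a
      -- the composite word from target l a
      set u := l' ++ l.reverse with hu
      have hut : G.target u (G.target l a) = G.target l' a := by
        rw [hu, G.target_append, hrev.1]
      have huw : ∀ β, G.wmap u (G.target l a) β = G.wmap l' a ((G.wmap l a).symm β) := by
        intro β
        rw [hu, G.wmap_append]
        simp only [LinearEquiv.trans_apply]
        rw [hrev.1, hrev.2]
      have hupos : ∀ β ∈ G.pos (G.target l a),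
          G.wmap u (G.target l a) β ∈ G.pos (G.target u (G.target l a)) := by
        intro β hβ
        rw [hut, huw]
        have h1 : (G.wmap l a).symm β ∈ G.root a := G.wsymm_root (G.pos_subset_root hβ)
        have h2 : -((G.wmap l a).symm β) ∈ G.pos a := by
          rcases G.root_cases h1 with h | h
          · exfalso
            have hmem : (G.wmap l a).symm β ∈ G.inv l a := by rw [hfl]; exact h
            have h3 : G.wmap l a ((G.wmap l a).symm β) ∈ -(G.pos (G.target l a)) := hmem.2
            rw [(G.wmap l a).apply_symm_apply] at h3
            exact G.pos_neg_disj hβ (G.mem_neg_pos.mp h3)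
          · exact h
        have hmem' : -((G.wmap l a).symm β) ∈ G.inv l' a := by rw [hfl']; exact h2
        have h4 : G.wmap l' a (-((G.wmap l a).symm β)) ∈ -(G.pos (G.target l' a)) := hmem'.2
        rw [map_neg] at h4
        have h5 := G.mem_neg_pos.mp h4
        rwa [neg_neg] at h5
      obtain ⟨hutar2, huww⟩ := G.rigid hR hupos
      have htargets : G.target l a = G.target l' a := by
        rw [← hut, hutar2]
      refine ⟨htargets, ?_⟩
      refine G.wmap_eq_of_apply fun β => ?_
      have h6 := congrArg (fun e : (N →₀ ℝ) ≃ₗ[ℝ] (N →₀ ℝ) => e (G.wmap l a β)) huww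
      simp only [LinearEquiv.refl_apply] at h6
      rw [huw, (G.wmap l a).symm_apply_apply] at h6
      exact h6.symm
end

section
/- Let n, n' ∈ N and a ∈ A. Define sequences a_0 := a, b_0 := a, and recursively a_{m+1} := n ▷ b_m and b_{m+1} := n' ▷ a_m for m ∈ ℕ₀. Then θ(n,n';a) := |{(nn')^m ▷ a : m ∈ ℕ₀} ∪ {(n'n)^m ▷ a : m ∈ ℕ₀}| satisfies: θ(n,n';a) = min{ m ∈ ℕ : a_m = b_m } if there exists m ∈ ℕ with a_m = b_m, and θ(n,n';a) is infinite if a_m ≠ b_m for all m ∈ ℕ. -/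
/-! With `σ = n n'` (a permutation, since `n` and `n'` are involutions), `Θ(n,n';a)` is the orbit
of `a` under the cyclic group `⟨σ⟩`, so its size is the minimal period of `a` under `σ` (and it is
infinite when `a` is not periodic). Unwinding the recursion gives `a_{2k} = σ^k a`,
`b_{2k} = σ^{-k} a`, `a_{2k+1} = n σ^{-k} a`, `b_{2k+1} = n' σ^k a`, so `a_m = b_m` holds exactly
when `σ^m a = a`, and `min {m ≥ 1 | a_m = b_m}` is that minimal period. -/

variable {N : Type*} {A : Type*}

open Function MulAction Subgroup

section GroupAction

variable {G α : Type*} [Group G] [MulAction G α]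

theorem mem_orbit_zpowers_iff {g : G} {a x : α} :
    x ∈ orbit (zpowers g) a ↔ ∃ k : ℤ, g ^ k • a = x := by
  constructor
  · rintro ⟨⟨_, k, rfl⟩, rfl⟩
    exact ⟨k, rfl⟩
  · rintro ⟨k, rfl⟩
    exact ⟨⟨g ^ k, k, rfl⟩, rfl⟩

theorem orbit_zpowers_eq (g : G) (a : α) :
    orbit (zpowers g) a = {x | ∃ m : ℕ, x = g ^ m • a ∨ x = g⁻¹ ^ m • a} := by
  ext x
  rw [mem_orbit_zpowers_iff]
  constructor
  · rintro ⟨k, rfl⟩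
    obtain ⟨m, rfl | rfl⟩ := k.eq_nat_or_neg
    · exact ⟨m, .inl (by rw [zpow_natCast])⟩
    · exact ⟨m, .inr (by rw [zpow_neg, zpow_natCast, inv_pow])⟩
  · rintro ⟨m, rfl | rfl⟩
    · exact ⟨m, by rw [zpow_natCast]⟩
    · exact ⟨-m, by rw [zpow_neg, zpow_natCast, inv_pow]⟩

-- Both sides are `0` when the orbit is infinite.
theorem ncard_orbit_zpowers (g : G) (a : α) :
    (orbit (zpowers g) a).ncard = minimalPeriod (g • ·) a := by
  rw [← Nat.card_coe_set_eq, Nat.card_congr (orbitZPowersEquiv g a), Nat.card_zmod]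

theorem finite_orbit_zpowers_iff (g : G) (a : α) :
    (orbit (zpowers g) a).Finite ↔ a ∈ periodicPts (g • ·) := by
  rw [← minimalPeriod_pos_iff_mem_periodicPts, ← ncard_orbit_zpowers, Nat.pos_iff_ne_zero]
  refine ⟨fun hfin h0 => ?_, Set.finite_of_ncard_ne_zero⟩
  exact (nonempty_orbit a).ne_empty ((Set.ncard_eq_zero hfin).1 h0)

theorem smul_eq_smul_iff_inv_mul_smul_eq {x y : G} {b : α} :
    x • b = y • b ↔ (y⁻¹ * x) • b = b := by
  rw [mul_smul, inv_smul_eq_iff, eq_comm]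

section AlternatingSeq

variable {s t : G} {a : α} {f g : ℕ → α} (hf0 : f 0 = a) (hg0 : g 0 = a)
  (hf : ∀ m, f (m + 1) = s • g m) (hg : ∀ m, g (m + 1) = t • f m)
include hf0 hg0 hf hg

theorem alternating_seq_even (k : ℕ) :
    f (2 * k) = (s * t) ^ k • a ∧ g (2 * k) = (t * s) ^ k • a := by
  induction k with
  | zero => exact ⟨by simpa using hf0, by simpa using hg0⟩
  | succ k ih =>
    rw [show 2 * (k + 1) = 2 * k + 1 + 1 by ring, hf, hg, hg, hf, ih.1, ih.2,
      pow_succ', pow_succ', mul_smul, mul_smul, mul_smul, mul_smul]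
    exact ⟨rfl, rfl⟩

theorem alternating_seq_eq_iff (hs : s⁻¹ = s) (ht : t⁻¹ = t) (m : ℕ) :
    f m = g m ↔ (s * t) ^ m • a = a := by
  have hts : t * s = (s * t)⁻¹ := by rw [mul_inv_rev, hs, ht]
  obtain ⟨k, rfl | rfl⟩ := Nat.even_or_odd' m
  · obtain ⟨hfk, hgk⟩ := alternating_seq_even hf0 hg0 hf hg k
    rw [hfk, hgk, smul_eq_smul_iff_inv_mul_smul_eq, hts, inv_pow, inv_inv, ← pow_add, two_mul]
  · obtain ⟨hfk, hgk⟩ := alternating_seq_even hf0 hg0 hf hg k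
    rw [hf, hg, hfk, hgk, ← mul_smul, ← mul_smul, smul_eq_smul_iff_inv_mul_smul_eq, mul_inv_rev,
      ht, mul_assoc, ← mul_assoc t s, ← pow_succ', hts, inv_pow, ← mul_inv_rev, ← pow_add,
      inv_smul_eq_iff, eq_comm, show k + 1 + k = 2 * k + 1 by ring]

end AlternatingSeq

end GroupAction

theorem altIter_eq_pow_smul {G : Type*} [Monoid G] [MulAction G A] (act : N → A → A)
    (i j : N) (σ : G) (hσ : ∀ x, σ • x = act i (act j x)) (a : A) (m : ℕ) :
    altIter act i j a m = σ ^ m • a := by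
  induction m with
  | zero => rw [pow_zero, one_smul]; rfl
  | succ m ih => rw [pow_succ', mul_smul, hσ, ← ih]; rfl

theorem thetaSet_eq_orbit_zpowers {G : Type*} [Group G] [MulAction G A] (act : N → A → A)
    (i j : N) (σ : G) (hσ : ∀ x, σ • x = act i (act j x)) (hσ' : ∀ x, σ⁻¹ • x = act j (act i x))
    (a : A) : ThetaSet act i j a = orbit (zpowers σ) a := by
  simp only [orbit_zpowers_eq, ThetaSet, altIter_eq_pow_smul act i j σ hσ,
    altIter_eq_pow_smul act j i σ⁻¹ hσ']

/-- with `a₀ = b₀ = a`, `a_{m+1} = n ▷ b_m`, `b_{m+1} = n' ▷ a_m`, the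
cardinality `θ(n,n';a) = |Θ(n,n';a)|` equals `min {m ∈ ℕ | a_m = b_m}` if such an `m`
exists, and `Θ(n,n';a)` is infinite otherwise. -/
theorem stmt19 (act : N → A → A) (hact : ∀ n a, act n (act n a) = a)
    (n n' : N) (a : A) (f g : ℕ → A) (hf0 : f 0 = a) (hg0 : g 0 = a)
    (hf : ∀ m, f (m + 1) = act n (g m)) (hg : ∀ m, g (m + 1) = act n' (f m)) :
    ((∃ m : ℕ, 0 < m ∧ f m = g m) →
      (ThetaSet act n n' a).Finite ∧
        (ThetaSet act n n' a).ncard = sInf {m : ℕ | 0 < m ∧ f m = g m}) ∧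
    ((∀ m : ℕ, 0 < m → f m ≠ g m) → (ThetaSet act n n' a).Infinite) := by
  set s := Involutive.toPerm (act n) (hact n)
  set t := Involutive.toPerm (act n') (hact n')
  have hfg (m : ℕ) : f m = g m ↔ IsPeriodicPt ((s * t) • ·) m a := by
    rw [IsPeriodicPt, IsFixedPt, smul_iterate]
    exact alternating_seq_eq_iff (s := s) (t := t) hf0 hg0 hf hg rfl rfl m
  rw [thetaSet_eq_orbit_zpowers act n n' (s * t) (fun _ => rfl) (fun _ => rfl), Set.Infinite,
    finite_orbit_zpowers_iff, ncard_orbit_zpowers, minimalPeriod_eq_sInf_n_pos_IsPeriodicPt]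
  simp only [mem_periodicPts, ← hfg]
  exact ⟨fun h => ⟨h, trivial⟩, fun h ⟨m, hm, hfgm⟩ => h m hm hfgm⟩
end
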